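/- arXiv:1501.04893 — 8 statements merged into one kernel-verified Lean document; each statement's English description precedes it below -/
import Mathlib

section
/- Let p be a prime, let k ≥ 1, a ∈ ℤ, d ≥ 1 be integers and let s_1,…,s_d ≥ 1. Set w = s_1 + ⋯ + s_d. Then the element (p^k)^w · H_{ap^k<(a+1)p^k}(s_d,…,s_1) of ℚ_p has p-adic valuation at least w, i.e. its p-adic absolute value is at most p^{−w}. -/
open Finset

/-- The multiple harmonic sum `H_{M<N}(s_d,…,s_1) = ∑_{M<n_1<⋯<n_d<N} 1/(n_1^{s_1}⋯n_d^{s_d})`,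
viewed in `ℚ_p`; the index `n_i` is paired with the exponent `s_i`. -/
noncomputable def mhs (p : ℕ) [Fact p.Prime] {d : ℕ} (M N : ℤ) (s : Fin d → ℕ) : ℚ_[p] :=
  ∑ n ∈ (Fintype.piFinset fun _ : Fin d => Finset.Ioo M N).filter
      (fun n => ∀ i j : Fin d, i < j → n i < n j),
    ∏ i, 1 / (n i : ℚ_[p]) ^ s i

/-- If `z` is not divisible by `p ^ k` (with `k ≥ 1`), then `‖z‖ ≥ p ^ (-(k-1))`. -/
lemma norm_int_ge_of_not_dvd (p : ℕ) [hp : Fact p.Prime] (k : ℕ) (hk : 1 ≤ k) (z : ℤ)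
    (hdvd : ¬ ((p : ℤ) ^ k ∣ z)) : (p : ℝ) ^ (-((k - 1 : ℕ) : ℤ)) ≤ ‖(z : ℚ_[p])‖ := by
  have hz : z ≠ 0 := by rintro rfl; exact hdvd (dvd_zero _)
  have hz' : (z : ℚ_[p]) ≠ 0 := by exact_mod_cast hz
  have hv : padicValInt p z < k := by
    by_contra h
    push_neg at h
    exact hdvd ((padicValInt_dvd_iff k z).mpr (Or.inr h))
  rw [Padic.norm_eq_zpow_neg_valuation hz', Padic.valuation_intCast]
  have hp1 : (1 : ℝ) < p := by exact_mod_cast hp.1.one_lt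
  apply zpow_le_zpow_right₀ hp1.le
  omega

/-- The `p`-adic valuation of `(p^k)^w · H_{ap^k<(a+1)p^k}(s_d,…,s_1)` is at least
the weight `w = s_1 + ⋯ + s_d`, i.e. its `p`-adic norm is at most `p^{-w}`. -/
theorem finite_mzv_valuation_ge_weight (p : ℕ) [Fact p.Prime] (k : ℕ) (hk : 1 ≤ k) (a : ℤ)
    (d : ℕ) (hd : 1 ≤ d) (s : Fin d → ℕ) (hs : ∀ i, 1 ≤ s i) :
    ‖((p : ℚ_[p]) ^ k) ^ (∑ i, s i) *
        mhs p (a * (p : ℤ) ^ k) ((a + 1) * (p : ℤ) ^ k) s‖ ≤ (p : ℝ) ^ (-(∑ i, s i : ℤ)) := by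
  have hp := (Fact.out : p.Prime)
  have hp0 : (0 : ℝ) < p := by exact_mod_cast hp.pos
  set w := ∑ i, s i with hw
  have hpk0 : (0 : ℤ) < (p : ℤ) ^ k := pow_pos (by exact_mod_cast hp.pos) k
  -- bound each term of the mhs sum
  have hterm : ∀ n ∈ (Fintype.piFinset fun _ : Fin d => Finset.Ioo (a * (p : ℤ) ^ k)
      ((a + 1) * (p : ℤ) ^ k)).filter (fun n => ∀ i j : Fin d, i < j → n i < n j),
      ‖∏ i, 1 / ((n i : ℚ_[p])) ^ s i‖ ≤ (p : ℝ) ^ (((k - 1 : ℕ) * w : ℕ) : ℤ) := by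
    intro n hn
    rw [Finset.mem_filter, Fintype.mem_piFinset] at hn
    have key : ∀ i, ‖(1 : ℚ_[p]) / ((n i : ℚ_[p])) ^ s i‖ ≤ (p : ℝ) ^ (((k - 1 : ℕ) * s i : ℕ) : ℤ) := by
      intro i
      have hmem := hn.1 i
      rw [Finset.mem_Ioo] at hmem
      have hdvd : ¬ ((p : ℤ) ^ k ∣ n i) := by
        rintro ⟨m, hm⟩
        have h1 : a * (p : ℤ) ^ k < (p : ℤ) ^ k * m := by rw [← hm]; exact hmem.1
        have h2 : (p : ℤ) ^ k * m < (a + 1) * (p : ℤ) ^ k := by rw [← hm]; exact hmem.2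
        rw [mul_comm ((p : ℤ) ^ k) m] at h1 h2
        have ha1 : a < m := lt_of_mul_lt_mul_right h1 hpk0.le
        have ha2 : m < a + 1 := lt_of_mul_lt_mul_right h2 hpk0.le
        omega
      have hlb := norm_int_ge_of_not_dvd p k hk (n i) hdvd
      have hz : (n i : ℚ_[p]) ≠ 0 := by
        intro h
        apply hdvd
        have : (n i : ℤ) = 0 := by exact_mod_cast h
        rw [this]; exact dvd_zero _
      have hnorm_pos : 0 < ‖(n i : ℚ_[p])‖ := norm_pos_iff.mpr hz
      rw [one_div, norm_inv, norm_pow]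
      rw [show (((k - 1 : ℕ) * s i : ℕ) : ℤ) = -(-(((k-1 : ℕ) : ℤ)) * (s i : ℤ)) by push_cast; ring]
      rw [zpow_neg]
      rw [inv_le_inv₀ (by positivity) (by positivity)]
      rw [zpow_mul, zpow_natCast]
      exact pow_le_pow_left₀ (by positivity) hlb _
    calc ‖∏ i, 1 / ((n i : ℚ_[p])) ^ s i‖ = ∏ i, ‖(1 : ℚ_[p]) / ((n i : ℚ_[p])) ^ s i‖ :=
          norm_prod _ _
      _ ≤ ∏ i : Fin d, (p : ℝ) ^ (((k - 1 : ℕ) * s i : ℕ) : ℤ) :=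
          Finset.prod_le_prod (fun i _ => norm_nonneg _) (fun i _ => key i)
      _ = (p : ℝ) ^ (((k - 1 : ℕ) * w : ℕ) : ℤ) := by
          simp only [zpow_natCast]
          rw [Finset.prod_pow_eq_pow_sum]
          congr 1
          rw [hw, Finset.mul_sum]
  have hmhs : ‖mhs p (a * (p : ℤ) ^ k) ((a + 1) * (p : ℤ) ^ k) s‖ ≤
      (p : ℝ) ^ (((k - 1 : ℕ) * w : ℕ) : ℤ) := by
    unfold mhs
    exact IsUltrametricDist.norm_sum_le_of_forall_le_of_nonneg (by positivity) hterm
  rw [norm_mul]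
  have hA : ‖((p : ℚ_[p]) ^ k) ^ w‖ = (p : ℝ) ^ (-((k * w : ℕ) : ℤ)) := by
    rw [← pow_mul, Padic.norm_p_pow]
  rw [hA]
  calc (p : ℝ) ^ (-((k * w : ℕ) : ℤ)) * ‖mhs p (a * (p : ℤ) ^ k) ((a + 1) * (p : ℤ) ^ k) s‖
      ≤ (p : ℝ) ^ (-((k * w : ℕ) : ℤ)) * (p : ℝ) ^ (((k - 1 : ℕ) * w : ℕ) : ℤ) := by
        exact mul_le_mul_of_nonneg_left hmhs (by positivity)
    _ = (p : ℝ) ^ (-(w : ℤ)) := by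
        rw [← zpow_add₀ (by positivity : (p : ℝ) ≠ 0)]
        congr 1
        have : ((k - 1 : ℕ) : ℤ) = (k : ℤ) - 1 := by omega
        push_cast [this]
        ring
    _ = (p : ℝ) ^ (-(∑ i, (s i : ℤ))) := by
        congr 1
        rw [hw]
        push_cast
        ring
end

section
/- Let p be a prime, let k ≥ 1, a ∈ ℤ, d ≥ 1 be integers and let s_1,…,s_d ≥ 1. Set w = s_1 + ⋯ + s_d. Then (p^k)^w · H_{ap^k<(a+1)p^k}(s_d,…,s_1) − p^w · H_p(s_d,…,s_1) has p-adic valuation at least w + 1, i.e. p-adic absolute value at most p^{−(w+1)}. -/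
open Finset

/-!
Multiplying by the weights, `(p^k)^w H_{ap^k<(a+1)p^k}(s)` is the sum, over strictly increasing
tuples `n` in the interval, of `∏ (p^k / n_i)^{s_i}`, and each factor has norm at most `1/p`
because no `n_i` is divisible by `p^k`. The tuples with every `n_i` divisible by `p^{k-1}` are
exactly `n_i = p^{k-1} (ap + c_i)` with `0 < c_1 < ⋯ < c_d < p`; for them the term equals
`∏ (p / (ap + c_i))^{s_i}`, which agrees with the term `∏ (p / c_i)^{s_i}` of `p^w H_p(s)` modulo
`p^{w+1}` because `ap + c_i ≡ c_i` are `p`-adic units. Every other tuple has an `n_j` of valuation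
at most `k - 2`, which gains an extra factor `1/p`. The ultrametric inequality assembles the bounds.
-/

noncomputable def strictMonoTuples (d : ℕ) (M N : ℤ) : Finset (Fin d → ℤ) :=
  (Fintype.piFinset fun _ : Fin d => Ioo M N).filter fun n => ∀ i j : Fin d, i < j → n i < n j

section StrictMonoTuples

variable {d : ℕ} {M N : ℤ}

theorem mem_strictMonoTuples {n : Fin d → ℤ} :
    n ∈ strictMonoTuples d M N ↔ (∀ i, n i ∈ Ioo M N) ∧ StrictMono n := by
  simp only [strictMonoTuples, mem_filter, Fintype.mem_piFinset]
  rfl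

theorem comp_mem_strictMonoTuples {e : ℤ → ℤ} (he : StrictMono e) {c : Fin d → ℤ}
    (hc : c ∈ strictMonoTuples d M N) : e ∘ c ∈ strictMonoTuples d (e M) (e N) := by
  rw [mem_strictMonoTuples] at hc ⊢
  exact ⟨fun i => by simpa [he.lt_iff_lt] using hc.1 i, he.comp hc.2⟩

theorem mem_image_comp_strictMonoTuples {e : ℤ → ℤ} (he : StrictMono e) {n : Fin d → ℤ}
    (hn : n ∈ strictMonoTuples d (e M) (e N)) (hrange : ∀ i, n i ∈ Set.range e) :
    n ∈ (strictMonoTuples d M N).image (e ∘ ·) := by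
  choose c hc using hrange
  obtain rfl : e ∘ c = n := funext hc
  refine mem_image_of_mem _ ?_
  rw [mem_strictMonoTuples] at hn ⊢
  exact ⟨fun i => by simpa [he.lt_iff_lt] using hn.1 i, fun i j hij => he.lt_iff_lt.1 (hn.2 hij)⟩

theorem sum_strictMonoTuples_eq_sum_sdiff_add_sum_comp {β : Type*} [AddCommMonoid β]
    {e : ℤ → ℤ} (he : StrictMono e) (f : (Fin d → ℤ) → β) :
    ∑ n ∈ strictMonoTuples d (e M) (e N), f n =
      ∑ n ∈ strictMonoTuples d (e M) (e N) \ (strictMonoTuples d M N).image (e ∘ ·), f n +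
        ∑ c ∈ strictMonoTuples d M N, f (e ∘ c) := by
  have hsub : (strictMonoTuples d M N).image (e ∘ ·) ⊆ strictMonoTuples d (e M) (e N) := by
    simpa only [image_subset_iff] using fun c => comp_mem_strictMonoTuples he
  rw [← sum_sdiff hsub, sum_image fun x _ y _ h => he.injective.comp_left h]

theorem pow_sum_mul_mhs (p : ℕ) [Fact p.Prime] (x : ℚ_[p]) (s : Fin d → ℕ) :
    x ^ (∑ i, s i) * mhs p M N s = ∑ n ∈ strictMonoTuples d M N, ∏ i, (x / n i) ^ s i := by
  rw [mhs, mul_sum]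
  refine sum_congr rfl fun n _ => ?_
  rw [← prod_pow_eq_pow_sum, ← prod_mul_distrib]
  simp only [mul_one_div, div_pow]

end StrictMonoTuples

namespace IsUltrametricDist

variable {R ι : Type*} [NormedCommRing R] [NormOneClass R] [IsUltrametricDist R]

theorem norm_prod_sub_prod_le (t : Finset ι) {f g : ι → R} {ε : ι → ℝ} {δ : ℝ} (hδ : 0 ≤ δ)
    (hf : ∀ i ∈ t, ‖f i‖ ≤ ε i) (hg : ∀ i ∈ t, ‖g i‖ ≤ ε i)
    (hfg : ∀ i ∈ t, ‖f i - g i‖ ≤ δ * ε i) :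
    ‖∏ i ∈ t, f i - ∏ i ∈ t, g i‖ ≤ δ * ∏ i ∈ t, ε i := by
  classical
  induction t using Finset.induction with
  | empty => simp [hδ]
  | insert j t hj ih =>
    simp only [mem_insert, forall_eq_or_imp] at hf hg hfg
    have hε : 0 ≤ ε j := (norm_nonneg _).trans hf.1
    have hgt : ‖∏ i ∈ t, g i‖ ≤ ∏ i ∈ t, ε i :=
      (Finset.norm_prod_le _ _).trans (prod_le_prod (fun _ _ => norm_nonneg _) hg.2)
    rw [prod_insert hj, prod_insert hj, prod_insert hj,
      show f j * ∏ i ∈ t, f i - g j * ∏ i ∈ t, g i =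
        f j * (∏ i ∈ t, f i - ∏ i ∈ t, g i) + (f j - g j) * ∏ i ∈ t, g i by ring]
    refine (norm_add_le_max _ _).trans (max_le ?_ ?_)
    · calc _ ≤ ‖f j‖ * ‖∏ i ∈ t, f i - ∏ i ∈ t, g i‖ := norm_mul_le _ _
        _ ≤ ε j * (δ * ∏ i ∈ t, ε i) :=
          mul_le_mul hf.1 (ih hf.2 hg.2 hfg.2) (norm_nonneg _) hε
        _ = _ := by ring
    · calc _ ≤ ‖f j - g j‖ * ‖∏ i ∈ t, g i‖ := norm_mul_le _ _
        _ ≤ δ * ε j * ∏ i ∈ t, ε i := mul_le_mul hfg.1 hgt (norm_nonneg _) (by positivity)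
        _ = _ := by ring

theorem norm_pow_sub_pow_le {x y : R} {r δ : ℝ} (hδ : 0 ≤ δ) (hx : ‖x‖ ≤ r) (hy : ‖y‖ ≤ r)
    (hxy : ‖x - y‖ ≤ δ * r) (n : ℕ) : ‖x ^ n - y ^ n‖ ≤ δ * r ^ n := by
  simpa using norm_prod_sub_prod_le (range n) (f := fun _ => x) (g := fun _ => y) hδ
    (fun _ _ => hx) (fun _ _ => hy) (fun _ _ => hxy)

end IsUltrametricDist

theorem prod_pow_le_pow_sum_add_one {ι : Type*} [Fintype ι] {u : ι → ℝ} {s : ι → ℕ} {r : ℝ}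
    (hr : r ≤ 1) (hu₀ : ∀ i, 0 ≤ u i) (hu : ∀ i, u i ≤ r) {j : ι} (hj : u j ≤ r ^ 2)
    (hsj : 1 ≤ s j) : ∏ i, u i ^ s i ≤ r ^ (∑ i, s i + 1) := by
  classical
  have hr₀ : 0 ≤ r := (hu₀ j).trans (hu j)
  calc ∏ i, u i ^ s i ≤ ∏ i, r ^ (s i + if i = j then 1 else 0) :=
        prod_le_prod (fun i _ => pow_nonneg (hu₀ i) _) fun i _ => ?_
    _ = r ^ (∑ i, s i + 1) := by
        rw [prod_pow_eq_pow_sum, sum_add_distrib, sum_ite_eq' univ j, if_pos (mem_univ j)]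
  split_ifs with h
  · subst h
    calc u i ^ s i ≤ (r ^ 2) ^ s i := pow_le_pow_left₀ (hu₀ i) hj _
      _ = r ^ (2 * s i) := (pow_mul _ _ _).symm
      _ ≤ r ^ (s i + 1) := pow_le_pow_of_le_one hr₀ hr (by omega)
  · exact pow_le_pow_left₀ (hu₀ i) (hu i) _

namespace Int

theorem not_dvd_of_mem_Ioo_mul {q a n : ℤ} (h : n ∈ Ioo (a * q) ((a + 1) * q)) : ¬ q ∣ n := by
  rintro ⟨b, rfl⟩
  obtain ⟨h₁, h₂⟩ := mem_Ioo.1 h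
  have hq : 0 < q := by linarith
  rw [mul_comm q b] at h₁ h₂
  have := lt_of_mul_lt_mul_right h₁ hq.le
  have := lt_of_mul_lt_mul_right h₂ hq.le
  omega

theorem strictMono_mul_add {q : ℤ} (hq : 0 < q) (b : ℤ) : StrictMono fun c => q * (b + c) :=
  fun _ _ h => mul_lt_mul_of_pos_left (add_lt_add_right h b) hq

theorem mem_range_mul_add_of_dvd {q n : ℤ} (b : ℤ) (h : q ∣ n) :
    n ∈ Set.range fun c => q * (b + c) :=
  ⟨n / q - b, by simp [Int.mul_ediv_cancel' h]⟩

end Int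

namespace Padic

variable {p : ℕ} [hp : Fact p.Prime]

theorem inv_pow_le_norm_intCast {z : ℤ} {m : ℕ} (h : ¬ (p : ℤ) ^ (m + 1) ∣ z) :
    (p : ℝ)⁻¹ ^ m ≤ ‖(z : ℚ_[p])‖ := by
  have hz : z ≠ 0 := by rintro rfl; exact h (dvd_zero _)
  have hv : padicValInt p z ≤ m := by
    by_contra hlt
    exact h ((padicValInt_dvd_iff _ _).2 (Or.inr (by omega)))
  rw [norm_eq_zpow_neg_valuation (Int.cast_ne_zero.2 hz), valuation_intCast, inv_pow,
    ← zpow_natCast, ← zpow_neg]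
  exact zpow_le_zpow_right₀ (mod_cast hp.out.one_le) (by omega)

theorem norm_pow_div_intCast_le {z : ℤ} {m : ℕ} (t : ℕ) (h : ¬ (p : ℤ) ^ (m + 1) ∣ z) :
    ‖(p : ℚ_[p]) ^ (m + t) / z‖ ≤ (p : ℝ)⁻¹ ^ t := by
  have hz : 0 < ‖(z : ℚ_[p])‖ := norm_pos_iff.2 (Int.cast_ne_zero.2 (by rintro rfl; simp at h))
  rw [norm_div, norm_pow, norm_p, div_le_iff₀ hz, pow_add, mul_comm]
  gcongr
  exact inv_pow_le_norm_intCast h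

theorem norm_div_intCast_of_not_dvd (x : ℚ_[p]) {z : ℤ} (h : ¬ (p : ℤ) ∣ z) :
    ‖x / z‖ = ‖x‖ := by
  rw [norm_div, le_antisymm (norm_int_le_one z) (not_lt.1 (mt norm_intCast_lt_one_iff.1 h)),
    div_one]

theorem norm_div_intCast_sub_div_intCast_le (x : ℚ_[p]) {y z : ℤ} (hz : ¬ (p : ℤ) ∣ z)
    (hyz : (p : ℤ) ∣ y - z) : ‖x / y - x / z‖ ≤ ‖x‖ * (p : ℝ)⁻¹ := by
  have hy : ¬ (p : ℤ) ∣ y := fun hy => hz (by simpa using dvd_sub hy hyz)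
  have hy0 : (y : ℚ_[p]) ≠ 0 := Int.cast_ne_zero.2 (by rintro rfl; simp at hy)
  have hz0 : (z : ℚ_[p]) ≠ 0 := Int.cast_ne_zero.2 (by rintro rfl; simp at hz)
  rw [div_sub_div _ _ hy0 hz0, show x * z - y * x = x * ((z - y : ℤ) : ℚ_[p]) by push_cast; ring,
    ← Int.cast_mul, norm_div_intCast_of_not_dvd _ ?_, norm_mul]
  · gcongr
    simpa using (norm_int_le_pow_iff_dvd (z - y) 1).2 (by simpa using dvd_sub_comm.1 hyz)
  · exact (Nat.prime_iff_prime_int.1 hp.out).not_dvd_mul hy hz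

theorem pow_succ_div_intCast_pow_mul (m : ℕ) (b : ℤ) :
    (p : ℚ_[p]) ^ (m + 1) / (((p : ℤ) ^ m * b : ℤ) : ℚ_[p]) = p / b := by
  push_cast
  rw [pow_succ, mul_div_mul_left _ _ (pow_ne_zero _ (Nat.cast_ne_zero.2 hp.out.ne_zero))]

theorem norm_prod_pow_div_le_of_not_dvd {d m : ℕ} {s : Fin d → ℕ} {n : Fin d → ℤ}
    (hn : ∀ i, ¬ (p : ℤ) ^ (m + 1) ∣ n i) {j : Fin d} (hj : ¬ (p : ℤ) ^ m ∣ n j)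
    (hsj : 1 ≤ s j) :
    ‖∏ i, ((p : ℚ_[p]) ^ (m + 1) / n i) ^ s i‖ ≤ (p : ℝ)⁻¹ ^ (∑ i, s i + 1) := by
  obtain ⟨m, rfl⟩ := Nat.exists_eq_succ_of_ne_zero (n := m) (by rintro rfl; simp at hj)
  simp only [norm_prod, norm_pow]
  exact prod_pow_le_pow_sum_add_one (inv_le_one_of_one_le₀ (mod_cast hp.out.one_le))
    (fun _ => norm_nonneg _) (fun i => by simpa using norm_pow_div_intCast_le 1 (hn i))
    (norm_pow_div_intCast_le 2 hj) hsj

theorem norm_prod_pow_p_div_sub_le {d : ℕ} (s : Fin d → ℕ) {y z : Fin d → ℤ}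
    (hz : ∀ i, ¬ (p : ℤ) ∣ z i) (hyz : ∀ i, (p : ℤ) ∣ y i - z i) :
    ‖∏ i, ((p : ℚ_[p]) / y i) ^ s i - ∏ i, ((p : ℚ_[p]) / z i) ^ s i‖ ≤
      (p : ℝ)⁻¹ ^ (∑ i, s i + 1) := by
  have hy (i : Fin d) : ¬ (p : ℤ) ∣ y i := fun h => hz i (by simpa using dvd_sub h (hyz i))
  have hp₀ : 0 ≤ (p : ℝ)⁻¹ := by positivity
  have hny (i : Fin d) : ‖(p : ℚ_[p]) / y i‖ ≤ (p : ℝ)⁻¹ := by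
    rw [norm_div_intCast_of_not_dvd _ (hy i), norm_p]
  have hnz (i : Fin d) : ‖(p : ℚ_[p]) / z i‖ ≤ (p : ℝ)⁻¹ := by
    rw [norm_div_intCast_of_not_dvd _ (hz i), norm_p]
  have hpow (i : Fin d) :
      ‖((p : ℚ_[p]) / y i) ^ s i - ((p : ℚ_[p]) / z i) ^ s i‖ ≤ (p : ℝ)⁻¹ * (p : ℝ)⁻¹ ^ s i :=
    IsUltrametricDist.norm_pow_sub_pow_le hp₀ (hny i) (hnz i)
      (by simpa [norm_p] using norm_div_intCast_sub_div_intCast_le (p : ℚ_[p]) (hz i) (hyz i)) _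
  calc _ ≤ (p : ℝ)⁻¹ * ∏ i, (p : ℝ)⁻¹ ^ s i :=
        IsUltrametricDist.norm_prod_sub_prod_le univ hp₀
          (fun i _ => by rw [norm_pow]; exact pow_le_pow_left₀ (norm_nonneg _) (hny i) _)
          (fun i _ => by rw [norm_pow]; exact pow_le_pow_left₀ (norm_nonneg _) (hnz i) _)
          (fun i _ => hpow i)
    _ = _ := by rw [prod_pow_eq_pow_sum, pow_succ']

end Padic

theorem finite_mzv_congruence_general (p : ℕ) [Fact p.Prime] (k : ℕ) (hk : 1 ≤ k) (a : ℤ)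
    (d : ℕ) (s : Fin d → ℕ) (hs : ∀ i, 1 ≤ s i) :
    ‖((p : ℚ_[p]) ^ k) ^ (∑ i, s i) *
          mhs p (a * (p : ℤ) ^ k) ((a + 1) * (p : ℤ) ^ k) s -
        (p : ℚ_[p]) ^ (∑ i, s i) * mhs p 0 (p : ℤ) s‖
      ≤ (p : ℝ) ^ (-((∑ i, s i : ℤ) + 1)) := by
  obtain ⟨m, rfl⟩ : ∃ m, k = m + 1 := ⟨k - 1, by omega⟩
  set e : ℤ → ℤ := fun c => (p : ℤ) ^ m * (a * p + c) with he_def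
  have he : StrictMono e :=
    Int.strictMono_mul_add (pow_pos (mod_cast (Fact.out : p.Prime).pos) m) _
  have hlo : e 0 = a * (p : ℤ) ^ (m + 1) := by rw [he_def]; ring
  have hhi : e p = (a + 1) * (p : ℤ) ^ (m + 1) := by rw [he_def]; ring
  have hrhs : (p : ℝ) ^ (-((∑ i, s i : ℤ) + 1)) = (p : ℝ)⁻¹ ^ (∑ i, s i + 1) := by
    rw [inv_pow, ← zpow_natCast, ← zpow_neg]; push_cast; rfl
  rw [← hlo, ← hhi, pow_sum_mul_mhs, pow_sum_mul_mhs,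
    sum_strictMonoTuples_eq_sum_sdiff_add_sum_comp he, add_sub_assoc, ← sum_sub_distrib, hrhs]
  refine (IsUltrametricDist.norm_add_le_max _ _).trans (max_le ?_ ?_) <;>
    refine IsUltrametricDist.norm_sum_le_of_forall_le_of_nonneg (by positivity) fun n hn => ?_
  · obtain ⟨hn, hn_image⟩ := mem_sdiff.1 hn
    obtain ⟨j, hj⟩ : ∃ j, ¬ (p : ℤ) ^ m ∣ n j := by
      by_contra! h
      exact hn_image <|
        mem_image_comp_strictMonoTuples he hn fun i => Int.mem_range_mul_add_of_dvd _ (h i)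
    have hn_Ioo := (mem_strictMonoTuples.1 hn).1
    rw [hlo, hhi] at hn_Ioo
    exact Padic.norm_prod_pow_div_le_of_not_dvd
      (fun i => Int.not_dvd_of_mem_Ioo_mul (hn_Ioo i)) hj (hs j)
  · simp only [he_def, Function.comp_apply, Padic.pow_succ_div_intCast_pow_mul]
    refine Padic.norm_prod_pow_p_div_sub_le s (fun i => Int.not_dvd_of_mem_Ioo_mul (a := 0) ?_)
      fun i => ⟨a, by ring⟩
    simpa using (mem_strictMonoTuples.1 hn).1 i

/-- `(p^k)^w · H_{ap^k<(a+1)p^k}(s_d,…,s_1) − p^w · H_p(s_d,…,s_1)` has `p`-adic valuation at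
least `w + 1`, where `w = s_1 + ⋯ + s_d` is the weight. -/
theorem finite_mzv_congruence (p : ℕ) [Fact p.Prime] (k : ℕ) (hk : 1 ≤ k) (a : ℤ)
    (d : ℕ) (hd : 1 ≤ d) (s : Fin d → ℕ) (hs : ∀ i, 1 ≤ s i) :
    ‖((p : ℚ_[p]) ^ k) ^ (∑ i, s i) *
          mhs p (a * (p : ℤ) ^ k) ((a + 1) * (p : ℤ) ^ k) s -
        (p : ℚ_[p]) ^ (∑ i, s i) * mhs p 0 (p : ℤ) s‖
      ≤ (p : ℝ) ^ (-((∑ i, s i : ℤ) + 1)) :=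
  finite_mzv_congruence_general p k hk a d s hs
end

section
/- Let p be a prime, d ≥ 1, and let χ_1,…,χ_d be p-adic characters with Taylor coefficients c_{i,l} = χ_i^{((l))}(1) ∈ ℤ_p at 1. Let M be a nonzero integer and N ≥ 1 an integer such that either 0 ≤ M or M + N ≤ 0, and assume v_p(n) < v_p(M) for every integer n with 1 ≤ n ≤ N−1. Then in ℚ_p: ∑_{M<n_1<⋯<n_d<M+N} χ_1(n_1)⋯χ_d(n_d) = ∑_{l_1,…,l_d ≥ 0} (∏_{i=1}^d M^{l_i}·c_{i,l_i}) · (∑_{0<n_1<⋯<n_d<N} ∏_{i=1}^d χ_i(n_i)·n_i^{−l_i}), and the family on the right-hand side (indexed by (l_1,…,l_d) and the chains (n_1,…,n_d)) is summable in ℚ_p. -/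
/-!
Write `n_i + M = n_i (1 + M / n_i)`. The valuation hypothesis puts `M / n_i` in the disc
`‖x‖ ≤ 1/p` where `χ_i (1 + x)` is given by its Taylor series, so multiplicativity gives
`χ_i (n_i + M) = ∑_l c_{i,l} M^l χ_i(n_i) n_i^{-l}`. In the nonarchimedean field `ℚ_p` a finite
product of convergent series is the sum of the products of their terms, and a finite sum over
chains commutes with the sum over `l`; translating the chains by `M` gives the theorem.
-/

open Finset

noncomputable def chainsZ (d : ℕ) (M N : ℤ) : Finset (Fin d → ℤ) :=
  (Fintype.piFinset fun _ : Fin d => Finset.Ioo M N).filter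
    (fun n => ∀ i j : Fin d, i < j → n i < n j)

instance IsUltrametricDist.nonarchimedeanRing {R : Type*} [NormedRing R] [IsUltrametricDist R] :
    NonarchimedeanRing R :=
  { (inferInstance : NonarchimedeanAddGroup R) with }

section HasSum

variable {α β G R : Type*}

theorem hasSum_uncurry_of_fintype_right [AddCommMonoid G] [TopologicalSpace G] [ContinuousAdd G]
    [Fintype β] {f : α → β → G} {a : β → G} (h : ∀ b, HasSum (fun x => f x b) (a b)) :
    HasSum (Function.uncurry f) (∑ b, a b) := by
  classical
  have hslice : ∀ b, HasSum (fun y : α × β => if y.2 = b then f y.1 y.2 else 0) (a b) := by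
    intro b
    refine (Function.Injective.hasSum_iff (g := fun x => (x, b))
      (fun x y hxy => (Prod.mk.inj hxy).1) ?_).1 (by simpa [Function.comp_def] using h b)
    rintro ⟨x, b'⟩ hy
    rw [if_neg]
    rintro rfl
    exact hy ⟨x, rfl⟩
  convert hasSum_sum (s := univ) fun b _ => hslice b using 1
  ext y
  simp [Function.uncurry]

theorem hasSum_fin_prod_of_nonarchimedean [CommRing R] [UniformSpace R] [IsUniformAddGroup R]
    [NonarchimedeanRing R] : ∀ {d : ℕ} {f : Fin d → α → R} {a : Fin d → R},
    (∀ i, HasSum (f i) (a i)) → HasSum (fun l : Fin d → α => ∏ i, f i (l i)) (∏ i, a i)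
  | 0, _, _, _ => by simp
  | _ + 1, _, _, h => by
    have := (h 0).mul_of_nonarchimedean (hasSum_fin_prod_of_nonarchimedean fun i => h i.succ)
    rw [← (Fin.consEquiv fun _ => α).hasSum_iff, Fin.prod_univ_succ]
    exact this.congr_fun fun x => by simp [Fin.prod_univ_succ, Fin.consEquiv]

end HasSum

section Taylor

variable {K : Type*} [NormedField K] {r : ℝ}

theorem hasSum_apply_add_of_taylor {χ : K → K} {a : ℕ → K} (hr : r < 1)
    (hmul : ∀ x y : K, x ≠ 0 → y ≠ 0 → χ (x * y) = χ x * χ y)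
    (htaylor : ∀ x : K, ‖x‖ ≤ r → HasSum (fun l => a l * x ^ l) (χ (1 + x)))
    {k t : K} (hk : k ≠ 0) (ht : ‖t / k‖ ≤ r) :
    HasSum (fun l : ℕ => t ^ l * a l * (χ k * k ^ (-(l : ℤ)))) (χ (k + t)) := by
  have hunit : 1 + t / k ≠ 0 := by
    intro h
    have : ‖t / k‖ = 1 := by rw [eq_neg_of_add_eq_zero_right h, norm_neg, norm_one]
    linarith
  rw [show k + t = k * (1 + t / k) by field_simp, hmul k _ hk hunit]
  refine ((htaylor _ ht).mul_left (χ k)).congr_fun fun l => ?_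
  rw [zpow_neg, zpow_natCast, div_pow]
  field_simp

theorem hasSum_prod_apply_add_of_taylor [IsUltrametricDist K] {d : ℕ} {χ : Fin d → K → K}
    {a : Fin d → ℕ → K} (hr : r < 1)
    (hmul : ∀ i, ∀ x y : K, x ≠ 0 → y ≠ 0 → χ i (x * y) = χ i x * χ i y)
    (htaylor : ∀ i, ∀ x : K, ‖x‖ ≤ r → HasSum (fun l => a i l * x ^ l) (χ i (1 + x)))
    {k : Fin d → K} {t : K} (hk : ∀ i, k i ≠ 0) (ht : ∀ i, ‖t / k i‖ ≤ r) :
    HasSum (fun l : Fin d → ℕ =>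
        (∏ i, t ^ l i * a i (l i)) * ∏ i, χ i (k i) * k i ^ (-(l i : ℤ)))
      (∏ i, χ i (k i + t)) := by
  simpa only [prod_mul_distrib] using hasSum_fin_prod_of_nonarchimedean fun i =>
    hasSum_apply_add_of_taylor hr (hmul i) (htaylor i) (hk i) (ht i)

end Taylor

theorem Padic.norm_intCast_div_le_inv {p : ℕ} [Fact p.Prime] {m k : ℤ}
    (h : padicValInt p k < padicValInt p m) : ‖(m : ℚ_[p]) / k‖ ≤ (p : ℝ)⁻¹ := by
  have hm : (m : ℚ_[p]) ≠ 0 := Int.cast_ne_zero.2 fun hm => by simp [hm] at h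
  rcases eq_or_ne k 0 with rfl | hk
  · simp
  have hp : (1 : ℝ) < p := by exact_mod_cast (Fact.out : p.Prime).one_lt
  rw [norm_div, Padic.norm_eq_zpow_neg_valuation hm,
    Padic.norm_eq_zpow_neg_valuation (Int.cast_ne_zero.2 hk), Padic.valuation_intCast,
    Padic.valuation_intCast, ← zpow_sub₀ (by positivity), ← zpow_neg_one]
  exact zpow_le_zpow_right₀ hp.le (by omega)

theorem mem_chainsZ {d : ℕ} {A B : ℤ} {n : Fin d → ℤ} :
    n ∈ chainsZ d A B ↔ (∀ i, A < n i ∧ n i < B) ∧ StrictMono n := by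
  simp [chainsZ, StrictMono]

theorem sum_chainsZ_add_const {S : Type*} [AddCommMonoid S] (d : ℕ) (A B t : ℤ)
    (f : (Fin d → ℤ) → S) :
    ∑ n ∈ chainsZ d (A + t) (B + t), f n = ∑ n ∈ chainsZ d A B, f (n + fun _ => t) := by
  refine sum_nbij' (· - fun _ => t) (· + fun _ => t) (fun n hn => ?_) (fun n hn => ?_)
    (fun n _ => sub_add_cancel n _) (fun n _ => add_sub_cancel_right n _)
    (fun n _ => by rw [sub_add_cancel])
  · obtain ⟨hbd, hmono⟩ := mem_chainsZ.1 (mem_coe.1 hn)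
    refine mem_chainsZ.2 ⟨fun i => ?_, fun i j hij => by simpa using hmono hij⟩
    have := hbd i
    simp only [Pi.sub_apply]
    omega
  · obtain ⟨hbd, hmono⟩ := mem_chainsZ.1 (mem_coe.1 hn)
    refine mem_chainsZ.2 ⟨fun i => ?_, fun i j hij => by simpa using hmono hij⟩
    have := hbd i
    simp only [Pi.add_apply]
    omega

theorem mhs_translation_padic_general (p : ℕ) [Fact p.Prime] (d : ℕ)
    (χ : Fin d → ℚ_[p] → ℚ_[p]) (c : Fin d → ℕ → ℤ_[p])
    (hmul : ∀ i : Fin d, ∀ x y : ℚ_[p], x ≠ 0 → y ≠ 0 → χ i (x * y) = χ i x * χ i y)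
    (htaylor : ∀ i : Fin d, ∀ x : ℚ_[p], ‖x‖ ≤ (p : ℝ)⁻¹ →
      HasSum (fun l : ℕ => (c i l : ℚ_[p]) * x ^ l) (χ i (1 + x)))
    (M N : ℤ)
    (hval : ∀ n : ℤ, 1 ≤ n → n ≤ N - 1 → padicValInt p n < padicValInt p M) :
    Summable (fun x : (Fin d → ℕ) × {n : Fin d → ℤ // n ∈ chainsZ d 0 N} =>
        (∏ i, (M : ℚ_[p]) ^ (x.1 i) * (c i (x.1 i) : ℚ_[p])) *
          ∏ i, χ i ((x.2.1 i : ℚ_[p])) * ((x.2.1 i : ℚ_[p])) ^ (-(x.1 i : ℤ))) ∧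
    (∑ n ∈ chainsZ d M (M + N), ∏ i, χ i ((n i : ℚ_[p])))
      = ∑' l : Fin d → ℕ,
          (∏ i, (M : ℚ_[p]) ^ (l i) * (c i (l i) : ℚ_[p])) *
            ∑ n ∈ chainsZ d 0 N, ∏ i, χ i ((n i : ℚ_[p])) * ((n i : ℚ_[p])) ^ (-(l i : ℤ)) := by
  let G (n : Fin d → ℤ) (l : Fin d → ℕ) : ℚ_[p] :=
    (∏ i, (M : ℚ_[p]) ^ (l i) * (c i (l i) : ℚ_[p])) *
      ∏ i, χ i ((n i : ℚ_[p])) * ((n i : ℚ_[p])) ^ (-(l i : ℤ))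
  have hchain : ∀ n ∈ chainsZ d 0 N, HasSum (G n) (∏ i, χ i ((n i : ℚ_[p]) + M)) := by
    intro n hn
    have hbd := (mem_chainsZ.1 hn).1
    have hp : (p : ℝ)⁻¹ < 1 := inv_lt_one_of_one_lt₀ (by exact_mod_cast (Fact.out : p.Prime).one_lt)
    exact hasSum_prod_apply_add_of_taylor hp hmul htaylor
      (fun i => Int.cast_ne_zero.2 (hbd i).1.ne')
      (fun i => Padic.norm_intCast_div_le_inv (hval _ (hbd i).1 (Int.le_sub_one_of_lt (hbd i).2)))
  have hsummable := (hasSum_uncurry_of_fintype_right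
    (f := fun l (n : {n // n ∈ chainsZ d 0 N}) => G n.1 l) fun n => hchain n.1 n.2).summable
  refine ⟨hsummable.congr fun _ => rfl, ?_⟩
  have htranslate := sum_chainsZ_add_const d 0 N M fun n => ∏ i, χ i ((n i : ℚ_[p]))
  rw [zero_add, add_comm N M] at htranslate
  calc ∑ n ∈ chainsZ d M (M + N), ∏ i, χ i ((n i : ℚ_[p]))
      = ∑ n ∈ chainsZ d 0 N, ∏ i, χ i ((n i : ℚ_[p]) + M) := by
        rw [htranslate]
        simp only [Pi.add_apply, Int.cast_add]
    _ = ∑' l, ∑ n ∈ chainsZ d 0 N, G n l := (hasSum_sum hchain).tsum_eq.symm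
    _ = _ := tsum_congr fun l => (mul_sum _ _ _).symm

/-- Translation of upper bounds for multiple harmonic sums attached to `p`-adic characters:
if `χ_1,…,χ_d` are `p`-adic characters (multiplicative on nonzero elements, nonvanishing,
analytic on the closed disk of radius `1/p` around `1` with Taylor coefficients `c_{i,l} ∈ ℤ_p`),
`M ≠ 0`, `N ≥ 1`, `0 ≤ M` or `M + N ≤ 0`, and `v_p(n) < v_p(M)` for `1 ≤ n ≤ N − 1`, then
`H_{M<M+N}(χ_d,…,χ_1) = ∑_{l_1,…,l_d ≥ 0} (∏ M^{l_i} c_{i,l_i}) · H_N(χ_d ψ_{l_d},…,χ_1 ψ_{l_1})`,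
the whole family (indexed by the `l`'s and the chains) being summable. -/
theorem mhs_translation_padic (p : ℕ) [Fact p.Prime] (d : ℕ) (hd : 1 ≤ d)
    (χ : Fin d → ℚ_[p] → ℚ_[p]) (c : Fin d → ℕ → ℤ_[p])
    (hmul : ∀ i : Fin d, ∀ x y : ℚ_[p], x ≠ 0 → y ≠ 0 → χ i (x * y) = χ i x * χ i y)
    (hne : ∀ i : Fin d, ∀ x : ℚ_[p], x ≠ 0 → χ i x ≠ 0)
    (htaylor : ∀ i : Fin d, ∀ x : ℚ_[p], ‖x‖ ≤ (p : ℝ)⁻¹ →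
      HasSum (fun l : ℕ => (c i l : ℚ_[p]) * x ^ l) (χ i (1 + x)))
    (M N : ℤ) (hM0 : M ≠ 0) (hN : 1 ≤ N) (hside : 0 ≤ M ∨ M + N ≤ 0)
    (hval : ∀ n : ℤ, 1 ≤ n → n ≤ N - 1 → padicValInt p n < padicValInt p M) :
    Summable (fun x : (Fin d → ℕ) × {n : Fin d → ℤ // n ∈ chainsZ d 0 N} =>
        (∏ i, (M : ℚ_[p]) ^ (x.1 i) * (c i (x.1 i) : ℚ_[p])) *
          ∏ i, χ i ((x.2.1 i : ℚ_[p])) * ((x.2.1 i : ℚ_[p])) ^ (-(x.1 i : ℤ))) ∧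
    (∑ n ∈ chainsZ d M (M + N), ∏ i, χ i ((n i : ℚ_[p])))
      = ∑' l : Fin d → ℕ,
          (∏ i, (M : ℚ_[p]) ^ (l i) * (c i (l i) : ℚ_[p])) *
            ∑ n ∈ chainsZ d 0 N, ∏ i, χ i ((n i : ℚ_[p])) * ((n i : ℚ_[p])) ^ (-(l i : ℤ)) :=
  mhs_translation_padic_general p d χ c hmul htaylor M N hval
end

section
/- Let p be a prime, a ∈ ℤ, and k, d ≥ 1 integers, and let s_1,…,s_d ≥ 1. Then in ℚ_p: ζ_{f^{k;a}}(s_d,…,s_1) = ∑_{l_1,…,l_d ≥ 0} (∏_{i=1}^d binom(−s_i, l_i)·a^{l_i}) · ζ_{f^{k;0}}(s_d+l_d,…,s_1+l_1), the family on the right being summable in ℚ_p (here a^0 = 1 even for a = 0). -/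
/-!
Shifting the summation range by `a p^k` writes `ζ_{f^{k;a}}` as a finite sum, over
`0 < n_1 < ⋯ < n_d < p^k`, of products of the factors `p^(ks) (n + a p^k)^(-s)`. Since
`‖a p^k‖ ≤ p^(-k) < ‖n‖`, each factor is the binomial series
`∑_l binom(-s,l) a^l p^(k(s+l)) n^(-s-l)`, which converges absolutely because
`‖binom(-s,l)‖ ≤ 1` in `ℚ_p`. Multiplying the `d` series and summing over the finitely many
tuples `n` gives the expansion.
-/

open Finset

/-- The generalized binomial coefficient `binom(−s,l) = (−1)^l · C(s+l−1, l) ∈ ℤ`. -/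
def negBinom (s l : ℕ) : ℤ := (-1) ^ l * (Nat.choose (s + l - 1) l : ℤ)

/-- The finite multiple zeta value
`ζ_{f^{k;a}}(s_d,…,s_1) = (p^k)^{s_1+⋯+s_d} · H_{ap^k<(a+1)p^k}(s_d,…,s_1) ∈ ℚ_p`. -/
noncomputable def zetaf (p : ℕ) [Fact p.Prime] (k : ℕ) (a : ℤ) {d : ℕ} (s : Fin d → ℕ) :
    ℚ_[p] :=
  ((p : ℚ_[p]) ^ k) ^ (∑ i, s i) * mhs p (a * (p : ℤ) ^ k) ((a + 1) * (p : ℤ) ^ k) s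

lemma negBinom_zero_right (s : ℕ) : negBinom s 0 = 1 := by
  simp [negBinom]

lemma negBinom_zero_succ (l : ℕ) : negBinom 0 (l + 1) = 0 := by
  simp [negBinom]

lemma negBinom_succ_succ (s l : ℕ) :
    negBinom (s + 1) (l + 1) = negBinom s (l + 1) - negBinom (s + 1) l := by
  simp only [negBinom, show s + 1 + (l + 1) - 1 = s + l + 1 by omega,
    show s + (l + 1) - 1 = s + l by omega, show s + 1 + l - 1 = s + l by omega,
    Nat.choose_succ_succ', pow_succ]
  push_cast
  ring

section NormedCommRing

variable {R ι : Type*} [NormedCommRing R]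

lemma prod_comp_consEquiv {n : ℕ} (f : Fin (n + 1) → ι → R) :
    (fun l : Fin (n + 1) → ι => ∏ i, f i (l i)) ∘ Fin.consEquiv (fun _ => ι) =
      fun z => f 0 z.1 * ∏ i, f i.succ (z.2 i) := by
  ext z
  simp [Fin.prod_univ_succ, Fin.consEquiv]

lemma summable_norm_pi_prod {n : ℕ} (f : Fin n → ι → R) (hf : ∀ i, Summable fun l => ‖f i l‖) :
    Summable fun l : Fin n → ι => ‖∏ i, f i (l i)‖ := by
  induction n with
  | zero => exact .of_finite
  | succ n ih =>
    rw [← (Fin.consEquiv fun _ => ι).summable_iff]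
    have hmul := (hf 0).mul_norm (ih (fun i => f i.succ) fun i => hf i.succ)
    rwa [← Function.comp_def norm, Function.comp_assoc, prod_comp_consEquiv]

lemma hasSum_pi_prod {n : ℕ} {f : Fin n → ι → R} {a : Fin n → R} (hf : ∀ i, HasSum (f i) (a i))
    (hf_norm : ∀ i, Summable fun l => ‖f i l‖) :
    HasSum (fun l : Fin n → ι => ∏ i, f i (l i)) (∏ i, a i) := by
  induction n with
  | zero => simp
  | succ n ih =>
    have htail := ih (fun i => hf i.succ) fun i => hf_norm i.succ
    have hprod := summable_mul_of_summable_norm' (hf_norm 0) (hf 0).summable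
      (summable_norm_pi_prod _ fun i => hf_norm i.succ) htail.summable
    rw [Fin.prod_univ_succ, ← (Fin.consEquiv fun _ => ι).hasSum_iff, prod_comp_consEquiv]
    exact ((hf 0).mul htail hprod :)

end NormedCommRing

lemma negBinom_mul_pow_mul_inv_pow_eq {K : Type*} [Field K] (s l : ℕ) (a π : K) {c : K}
    (hc : c ≠ 0) :
    (negBinom s l : K) * a ^ l * (π ^ (s + l) * (c ^ (s + l))⁻¹) =
      π ^ s * (c ^ s)⁻¹ * ((negBinom s l : K) * (a * π / c) ^ l) := by
  rw [div_pow, mul_pow, pow_add, pow_add]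
  field_simp

section Ultrametric

variable {K : Type*} [NormedField K] [IsUltrametricDist K]

lemma summable_norm_negBinom_mul_pow (s : ℕ) {x : K} (hx : ‖x‖ < 1) :
    Summable fun l => ‖(negBinom s l : K) * x ^ l‖ := by
  refine .of_nonneg_of_le (fun _ => norm_nonneg _) (fun l => ?_)
    (summable_geometric_of_lt_one (norm_nonneg x) hx)
  rw [norm_mul, norm_pow]
  exact mul_le_of_le_one_left (by positivity) (IsUltrametricDist.norm_intCast_le_one K _)

theorem hasSum_negBinom_mul_pow [CompleteSpace K] (s : ℕ) {x : K} (hx : ‖x‖ < 1) :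
    HasSum (fun l => (negBinom s l : K) * x ^ l) ((1 + x) ^ s)⁻¹ := by
  induction s with
  | zero =>
    rw [pow_zero, inv_one]
    convert hasSum_ite_eq 0 (1 : K) using 2 with l
    cases l <;> simp [negBinom_zero_right, negBinom_zero_succ]
  | succ s ih =>
    have hx1 : 1 + x ≠ 0 := by
      intro h
      rw [show x = -1 by linear_combination h] at hx
      simp at hx
    obtain ⟨T, hT⟩ := (summable_norm_negBinom_mul_pow (s + 1) hx).of_norm
    -- Pascal's rule for `negBinom` turns the tail of the series of `s` into `(1 + x) T - 1`.
    have hshift : HasSum (fun l => (negBinom s (l + 1) : K) * x ^ (l + 1)) (T - 1 + x * T) := by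
      have := ((hasSum_nat_add_iff' 1).mpr hT).add (hT.mul_left x)
      simp only [sum_range_one, negBinom_zero_right, pow_zero, Int.cast_one, mul_one] at this
      refine this.congr_fun fun l => ?_
      rw [negBinom_succ_succ]
      push_cast
      ring
    have htail : ((1 + x) ^ s)⁻¹ - 1 = T - 1 + x * T := by
      have := (hasSum_nat_add_iff' 1).mpr ih
      simp only [sum_range_one, negBinom_zero_right, pow_zero, Int.cast_one, mul_one] at this
      exact this.unique hshift
    have hT_eq : T = ((1 + x) ^ (s + 1))⁻¹ := by
      rw [pow_succ, mul_inv, eq_mul_inv_iff_mul_eq₀ hx1]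
      linear_combination -htail
    rwa [← hT_eq]

variable {s : ℕ} {a π c : K}

lemma summable_norm_negBinom_mul_pow_mul_inv_pow (h : ‖a * π‖ < ‖c‖) :
    Summable fun l => ‖(negBinom s l : K) * a ^ l * (π ^ (s + l) * (c ^ (s + l))⁻¹)‖ := by
  have hc : c ≠ 0 := norm_pos_iff.mp ((norm_nonneg _).trans_lt h)
  have hx : ‖a * π / c‖ < 1 := by rwa [norm_div, div_lt_one (norm_pos_iff.mpr hc)]
  simp_rw [negBinom_mul_pow_mul_inv_pow_eq s _ a π hc, norm_mul _ (_ * _)]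
  exact (summable_norm_negBinom_mul_pow s hx).mul_left _

lemma hasSum_negBinom_mul_pow_mul_inv_pow [CompleteSpace K] (h : ‖a * π‖ < ‖c‖) :
    HasSum (fun l => (negBinom s l : K) * a ^ l * (π ^ (s + l) * (c ^ (s + l))⁻¹))
      (π ^ s * ((c + a * π) ^ s)⁻¹) := by
  have hc : c ≠ 0 := norm_pos_iff.mp ((norm_nonneg _).trans_lt h)
  have hx : ‖a * π / c‖ < 1 := by rwa [norm_div, div_lt_one (norm_pos_iff.mpr hc)]
  have hsum : π ^ s * ((c + a * π) ^ s)⁻¹ = π ^ s * (c ^ s)⁻¹ * ((1 + a * π / c) ^ s)⁻¹ := by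
    rw [one_add_div hc, div_pow, inv_div]
    field_simp
  simp_rw [hsum, negBinom_mul_pow_mul_inv_pow_eq s _ a π hc]
  exact (hasSum_negBinom_mul_pow s hx).mul_left _

end Ultrametric

lemma Padic.norm_intCast_mul_prime_pow_lt {p : ℕ} [Fact p.Prime] (a : ℤ) {m : ℤ} {k : ℕ}
    (hm : ¬(p : ℤ) ^ k ∣ m) : ‖(a : ℚ_[p]) * (p : ℚ_[p]) ^ k‖ < ‖(m : ℚ_[p])‖ := by
  have hpk : ‖(p : ℚ_[p]) ^ k‖ = (p : ℝ) ^ (-(k : ℤ)) := by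
    rw [norm_pow, Padic.norm_p, inv_pow, zpow_neg, zpow_natCast]
  calc ‖(a : ℚ_[p]) * (p : ℚ_[p]) ^ k‖ ≤ ‖(p : ℚ_[p]) ^ k‖ := by
        rw [norm_mul]
        exact mul_le_of_le_one_left (norm_nonneg _) (Padic.norm_int_le_one a)
    _ < ‖(m : ℚ_[p])‖ := by
        rw [hpk]
        exact lt_of_not_ge (mt (Padic.norm_int_le_pow_iff_dvd m k).mp hm)

noncomputable def increasingTuples (d : ℕ) (M N : ℤ) : Finset (Fin d → ℤ) :=
  (Fintype.piFinset fun _ : Fin d => Ioo M N).filter fun n => ∀ i j : Fin d, i < j → n i < n j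

lemma mem_increasingTuples {d : ℕ} {M N : ℤ} {n : Fin d → ℤ} :
    n ∈ increasingTuples d M N ↔ (∀ i, M < n i ∧ n i < N) ∧ ∀ i j, i < j → n i < n j := by
  simp [increasingTuples]

section Padic

variable {p : ℕ} [Fact p.Prime]

lemma mhs_eq_sum {d : ℕ} (M N : ℤ) (s : Fin d → ℕ) :
    mhs p M N s = ∑ n ∈ increasingTuples d M N, ∏ i, 1 / (n i : ℚ_[p]) ^ s i :=
  rfl

lemma mhs_add_const {d : ℕ} (M N c : ℤ) (s : Fin d → ℕ) :
    mhs p (M + c) (N + c) s =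
      ∑ n ∈ increasingTuples d M N, ∏ i, (((n i : ℚ_[p]) + c) ^ s i)⁻¹ := by
  rw [mhs_eq_sum]
  refine sum_nbij' (fun n i => n i - c) (fun n i => n i + c) ?_ ?_ (by simp) (by simp)
    (fun n _ => by simp)
  all_goals
    intro n hn
    simp only [mem_increasingTuples] at hn ⊢
    exact ⟨fun i => by have := hn.1 i; omega, fun i j hij => by have := hn.2 i j hij; omega⟩

lemma zetaf_eq_sum (k : ℕ) (a : ℤ) {d : ℕ} (s : Fin d → ℕ) :
    zetaf p k a s = ∑ n ∈ increasingTuples d 0 ((p : ℤ) ^ k),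
      ∏ i, ((p : ℚ_[p]) ^ k) ^ s i * (((n i : ℚ_[p]) + a * (p : ℚ_[p]) ^ k) ^ s i)⁻¹ := by
  rw [zetaf, show a * (p : ℤ) ^ k = 0 + a * (p : ℤ) ^ k by ring,
    show (a + 1) * (p : ℤ) ^ k = (p : ℤ) ^ k + a * (p : ℤ) ^ k by ring, mhs_add_const, mul_sum]
  simp [prod_mul_distrib, prod_pow_eq_pow_sum]

lemma hasSum_zetaf_term {k : ℕ} (a : ℤ) {d : ℕ} (s : Fin d → ℕ) {n : Fin d → ℤ}
    (hn : n ∈ increasingTuples d 0 ((p : ℤ) ^ k)) :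
    HasSum (fun l : Fin d → ℕ => ∏ i, (negBinom (s i) (l i) : ℚ_[p]) * (a : ℚ_[p]) ^ l i *
        (((p : ℚ_[p]) ^ k) ^ (s i + l i) * ((n i : ℚ_[p]) ^ (s i + l i))⁻¹))
      (∏ i, ((p : ℚ_[p]) ^ k) ^ s i * (((n i : ℚ_[p]) + a * (p : ℚ_[p]) ^ k) ^ s i)⁻¹) := by
  have hlt : ∀ i, ‖(a : ℚ_[p]) * (p : ℚ_[p]) ^ k‖ < ‖(n i : ℚ_[p])‖ := fun i => by
    obtain ⟨hpos, hlt_pk⟩ := (mem_increasingTuples.mp hn).1 i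
    exact Padic.norm_intCast_mul_prime_pow_lt a fun hdvd => (Int.le_of_dvd hpos hdvd).not_gt hlt_pk
  exact hasSum_pi_prod (f := fun i l => (negBinom (s i) l : ℚ_[p]) * (a : ℚ_[p]) ^ l *
      (((p : ℚ_[p]) ^ k) ^ (s i + l) * ((n i : ℚ_[p]) ^ (s i + l))⁻¹))
    (fun i => hasSum_negBinom_mul_pow_mul_inv_pow (hlt i))
    fun i => summable_norm_negBinom_mul_pow_mul_inv_pow (hlt i)

lemma sum_prod_negBinom_eq_mul_zetaf (k : ℕ) (a : ℤ) {d : ℕ} (s l : Fin d → ℕ) :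
    ∑ n ∈ increasingTuples d 0 ((p : ℤ) ^ k), ∏ i, (negBinom (s i) (l i) : ℚ_[p]) *
        (a : ℚ_[p]) ^ l i * (((p : ℚ_[p]) ^ k) ^ (s i + l i) * ((n i : ℚ_[p]) ^ (s i + l i))⁻¹) =
      (∏ i, (negBinom (s i) (l i) : ℚ_[p]) * (a : ℚ_[p]) ^ l i) *
        zetaf p k 0 (fun i => s i + l i) := by
  simp [zetaf_eq_sum, prod_mul_distrib, mul_sum]

end Padic

theorem zetaf_translation_general (p : ℕ) [Fact p.Prime] (a : ℤ) (k d : ℕ) (s : Fin d → ℕ) :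
    Summable (fun l : Fin d → ℕ =>
        (∏ i, (negBinom (s i) (l i) : ℚ_[p]) * (a : ℚ_[p]) ^ (l i)) *
          zetaf p k 0 (fun i => s i + l i)) ∧
    zetaf p k a s
      = ∑' l : Fin d → ℕ,
          (∏ i, (negBinom (s i) (l i) : ℚ_[p]) * (a : ℚ_[p]) ^ (l i)) *
            zetaf p k 0 (fun i => s i + l i) := by
  have hsum := hasSum_sum fun n hn => hasSum_zetaf_term (p := p) (k := k) a s hn
  rw [← zetaf_eq_sum] at hsum
  simp_rw [sum_prod_negBinom_eq_mul_zetaf] at hsum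
  exact ⟨hsum.summable, hsum.tsum_eq.symm⟩

/-- `ζ_{f^{k;a}}(s_d,…,s_1) = ∑_{l_1,…,l_d ≥ 0} (∏ binom(−s_i,l_i)·a^{l_i}) ·
ζ_{f^{k;0}}(s_d+l_d,…,s_1+l_1)`, the family on the right being summable in `ℚ_p`. -/
theorem zetaf_translation (p : ℕ) [Fact p.Prime] (a : ℤ) (k d : ℕ) (hk : 1 ≤ k) (hd : 1 ≤ d)
    (s : Fin d → ℕ) (hs : ∀ i, 1 ≤ s i) :
    Summable (fun l : Fin d → ℕ =>
        (∏ i, (negBinom (s i) (l i) : ℚ_[p]) * (a : ℚ_[p]) ^ (l i)) *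
          zetaf p k 0 (fun i => s i + l i)) ∧
    zetaf p k a s
      = ∑' l : Fin d → ℕ,
          (∏ i, (negBinom (s i) (l i) : ℚ_[p]) * (a : ℚ_[p]) ^ (l i)) *
            zetaf p k 0 (fun i => s i + l i) :=
  zetaf_translation_general p a k d s
end

section
/- (Addition of upper bounds.) Let R be a commutative ring, let N_1, N_2 ≥ 1 and d ≥ 1 be integers, and let χ_1,…,χ_d : ℤ → R be arbitrary functions. Then ∑_{0<n_1<⋯<n_d<N_1+N_2} χ_1(n_1)⋯χ_d(n_d) = ∑_{j=0}^{d} (∑_{N_1<n_{j+1}<⋯<n_d<N_1+N_2} ∏_{i=j+1}^d χ_i(n_i)) · (∑_{0<n_1<⋯<n_j<N_1} ∏_{i=1}^j χ_i(n_i)) + ∑_{j=1}^{d} (∑_{N_1<n_{j+1}<⋯<n_d<N_1+N_2} ∏_{i=j+1}^d χ_i(n_i)) · χ_j(N_1) · (∑_{0<n_1<⋯<n_{j−1}<N_1} ∏_{i=1}^{j−1} χ_i(n_i)), where an empty multiple sum (over 0 indices) equals 1. -/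
open Finset

/-- Multiple harmonic sum attached to a list of functions `[χ_1, …, χ_d]` (the head `χ_1` is
paired with the innermost index `n_1`), with fixed upper bound `N` and lower bound `M`:
`hsum N M [χ_1,…,χ_d] = ∑_{M<n_1<⋯<n_d<N} χ_1(n_1)⋯χ_d(n_d)`; for the empty list it is `1`. -/
noncomputable def hsum {R : Type*} [CommRing R] (N : ℤ) : ℤ → List (ℤ → R) → R
  | _, [] => 1
  | M, χ :: t => ∑ n ∈ Finset.Ioo M N, χ n * hsum N n t

/-!
Classify the tuples `M < n_1 < ⋯ < n_d < N` by the position of the intermediate bound `N₁`: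
either `n_j < N₁ < n_{j+1}` for a unique `0 ≤ j ≤ d`, or `n_j = N₁` for a unique `1 ≤ j ≤ d`.
The first kind contributes `H_{N₁<N}(χ_d,…,χ_{j+1}) · H_{M<N₁}(χ_j,…,χ_1)`, the second
`H_{N₁<N}(χ_d,…,χ_{j+1}) · χ_j(N₁) · H_{M<N₁}(χ_{j-1},…,χ_1)`. Formally, by induction on `d`:
splitting the range of the innermost index `n_1` into `(M, N₁)`, `{N₁}` and `(N₁, N)` gives the
same recursion for both sides.
-/

lemma Finset.Ioo_eq_union_insert {α : Type*} [LinearOrder α] [LocallyFiniteOrder α] {a b c : α}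
    (hab : a < b) (hbc : b < c) : Ioo a c = Ioo a b ∪ insert b (Ioo b c) := by
  ext x
  simp only [mem_union, mem_insert, mem_Ioo]
  grind

lemma Finset.disjoint_Ioo_insert_Ioo {α : Type*} [LinearOrder α] [LocallyFiniteOrder α]
    (a b c : α) : Disjoint (Ioo a b) (insert b (Ioo b c)) := by
  simp only [disjoint_left, mem_Ioo, mem_insert]
  grind

section

variable {R : Type*} [CommRing R] (N N₁ : ℤ)

lemma hsum_cons (M : ℤ) (χ : ℤ → R) (t : List (ℤ → R)) :
    hsum N M (χ :: t) = ∑ n ∈ Ioo M N, χ n * hsum N n t := by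
  rw [hsum]

lemma sum_mul_hsum_cons {ι : Type*} (s : Finset ι) (a : ι → R) (M : ℤ) (χ : ℤ → R)
    (l : ι → List (ℤ → R)) :
    ∑ j ∈ s, a j * hsum N M (χ :: l j) =
      ∑ n ∈ Ioo M N, χ n * ∑ j ∈ s, a j * hsum N n (l j) := by
  simp only [hsum_cons, mul_sum]
  rw [sum_comm]
  exact sum_congr rfl fun _ _ => sum_congr rfl fun _ _ => by ring

lemma hsum_cons_split {M : ℤ} (hM : M < N₁) (hN : N₁ < N) (χ : ℤ → R) (t : List (ℤ → R)) :
    hsum N M (χ :: t) =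
      ∑ n ∈ Ioo M N₁, χ n * hsum N n t + χ N₁ * hsum N N₁ t + hsum N N₁ (χ :: t) := by
  rw [hsum_cons, Ioo_eq_union_insert hM hN, sum_union (disjoint_Ioo_insert_Ioo M N₁ N),
    sum_insert (by simp), hsum_cons, add_assoc]

noncomputable def hsumAvoid (M : ℤ) (L : List (ℤ → R)) : R :=
  ∑ j ∈ range (L.length + 1), hsum N N₁ (L.drop j) * hsum N₁ M (L.take j)

noncomputable def hsumHit (M : ℤ) (L : List (ℤ → R)) : R :=
  ∑ j : Fin L.length, hsum N N₁ (L.drop (j + 1)) * L.get j N₁ * hsum N₁ M (L.take j)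

lemma hsumAvoid_nil (M : ℤ) : hsumAvoid N N₁ M ([] : List (ℤ → R)) = 1 := by
  simp [hsumAvoid, hsum]

lemma hsumHit_nil (M : ℤ) : hsumHit N N₁ M ([] : List (ℤ → R)) = 0 := by
  simp [hsumHit]

lemma hsumAvoid_cons (M : ℤ) (χ : ℤ → R) (t : List (ℤ → R)) :
    hsumAvoid N N₁ M (χ :: t) =
      ∑ n ∈ Ioo M N₁, χ n * hsumAvoid N N₁ n t + hsum N N₁ (χ :: t) := by
  rw [hsumAvoid, List.length_cons, sum_range_succ']
  simp only [List.drop_succ_cons, List.take_succ_cons, List.drop_zero, List.take_zero]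
  rw [sum_mul_hsum_cons, hsum, mul_one]
  rfl

lemma hsumHit_cons (M : ℤ) (χ : ℤ → R) (t : List (ℤ → R)) :
    hsumHit N N₁ M (χ :: t) =
      ∑ n ∈ Ioo M N₁, χ n * hsumHit N N₁ n t + χ N₁ * hsum N N₁ t := by
  rw [hsumHit]
  refine (Fin.sum_univ_succ (n := t.length) _).trans ?_
  rw [add_comm]
  simp only [Fin.val_zero, Fin.val_succ, List.drop_succ_cons, List.take_succ_cons,
    List.drop_zero, List.take_zero, List.get_eq_getElem, List.getElem_cons_succ]
  rw [sum_mul_hsum_cons, hsum, mul_one, mul_comm (hsum N N₁ t)]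
  rfl

theorem hsum_eq_hsumAvoid_add_hsumHit (hN : N₁ < N) (L : List (ℤ → R)) {M : ℤ} (hM : M < N₁) :
    hsum N M L = hsumAvoid N N₁ M L + hsumHit N N₁ M L := by
  induction L generalizing M with
  | nil => rw [hsumAvoid_nil, hsumHit_nil, hsum, add_zero]
  | cons χ t ih =>
    have hinner : ∑ n ∈ Ioo M N₁, χ n * hsum N n t =
        ∑ n ∈ Ioo M N₁, χ n * (hsumAvoid N N₁ n t + hsumHit N N₁ n t) :=
      sum_congr rfl fun n hn => by rw [ih (mem_Ioo.mp hn).2]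
    rw [hsum_cons_split N N₁ hM hN, hinner, hsumAvoid_cons, hsumHit_cons]
    simp only [mul_add, sum_add_distrib]
    ring

end

theorem mhs_addition_general {R : Type*} [CommRing R] (N₁ N₂ : ℤ) (h1 : 1 ≤ N₁) (h2 : 1 ≤ N₂)
    (L : List (ℤ → R)) :
    hsum (N₁ + N₂) 0 L
      = (∑ j ∈ Finset.range (L.length + 1),
            hsum (N₁ + N₂) N₁ (L.drop j) * hsum N₁ 0 (L.take j))
        + ∑ j : Fin L.length,
            hsum (N₁ + N₂) N₁ (L.drop ((j : ℕ) + 1)) * L.get j N₁ *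
              hsum N₁ 0 (L.take (j : ℕ)) :=
  hsum_eq_hsumAvoid_add_hsumHit (N₁ + N₂) N₁ (by omega) L (by omega)

/-- Addition of upper bounds:
`H_{0<N₁+N₂}(χ_d,…,χ_1) = ∑_{j=0}^d H_{N₁<N₁+N₂}(χ_d,…,χ_{j+1})·H_{0<N₁}(χ_j,…,χ_1)
 + ∑_{j=1}^d H_{N₁<N₁+N₂}(χ_d,…,χ_{j+1})·χ_j(N₁)·H_{0<N₁}(χ_{j−1},…,χ_1)`
(in the second sum, `j` is represented `0`-based by `j : Fin L.length`, so `χ_j = L.get j`). -/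
theorem mhs_addition {R : Type*} [CommRing R] (N₁ N₂ : ℤ) (h1 : 1 ≤ N₁) (h2 : 1 ≤ N₂)
    (L : List (ℤ → R)) (hL : 1 ≤ L.length) :
    hsum (N₁ + N₂) 0 L
      = (∑ j ∈ Finset.range (L.length + 1),
            hsum (N₁ + N₂) N₁ (L.drop j) * hsum N₁ 0 (L.take j))
        + ∑ j : Fin L.length,
            hsum (N₁ + N₂) N₁ (L.drop ((j : ℕ) + 1)) * L.get j N₁ *
              hsum N₁ 0 (L.take (j : ℕ)) :=
  mhs_addition_general N₁ N₂ h1 h2 L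
end

section
/- (Multiplication of upper bounds.) Let R be a commutative ring, let N, M ≥ 1 and d ≥ 1 be integers, and let χ_1,…,χ_d : ℤ → R be arbitrary functions. For a subset E = {i_1 < ⋯ < i_{d'}} ⊆ {1,…,d} (possibly empty), set i_0 = 0 and i_{d'+1} = d+1, and define a block datum for E to be, for each t ∈ {0,…,d'}, an ordered partition of the gap {i_t+1, i_t+2, …, i_{t+1}−1} into j_t ≥ 0 nonempty blocks P_t^1,…,P_t^{j_t} of consecutive integers, listed in increasing order (j_t = 0 if the gap is empty). Then: ∑_{0<n_1<⋯<n_d<NM} χ_1(n_1)⋯χ_d(n_d) equals the sum, over all subsets E with block data, over all integer chains 0 = m_0 < m_1 < ⋯ < m_{d'} < m_{d'+1} = N, and over all choices, for each t ∈ {0,…,d'}, of integers m_t ≤ q_{t,1} < q_{t,2} < ⋯ < q_{t,j_t} ≤ m_{t+1} − 1, of the product (∏_{t=1}^{d'} χ_{i_t}(m_t·M)) · ∏_{t=0}^{d'} ∏_{x=1}^{j_t} (∑_{q_{t,x}M < n_{u} < (q_{t,x}+1)M, indices u running through P_t^x with n_u strictly increasing in u} ∏_{u ∈ P_t^x} χ_u(n_u)).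 -/
/-!
Sort the chains `0 < n_1 < ⋯ < n_d < NM` by their profile: the set `E` of indices with
`M ∣ n_i` and the quotients `Q_i = ⌊n_i / M⌋`. The profiles that occur are exactly the pairs
`(E, Q)` of the statement, which encode the paper's data: `Q` records `m_t` at the `t`-th
element of `E` and `q_{t,x}` on the block `P_t^x`, the blocks being the fibers of `Q` off `E`.
A chain has profile `(E, Q)` iff `n_i = Q_i M` on `E`, `Q_i M < n_i < (Q_i + 1) M` off `E`, and
`n` increases on each block: the cells of different blocks are disjoint intervals in the order
of the blocks. So the chains of a given profile form a product of one chain set per block, and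
their sum factors.
-/

open Finset

/-- Chain sum over a subset `S` of the index set: the sum, over all families `n` of integers
indexed by `S` with `a < n_u < b` for `u ∈ S` and `n` strictly increasing on `S`, of
`∏_{u ∈ S} χ_u(n_u)`.  (Indices outside `S` are frozen at `0` and not used.) -/
noncomputable def chainSumOn {R : Type*} [CommRing R] {d : ℕ} (χ : Fin d → ℤ → R)
    (S : Finset (Fin d)) (a b : ℤ) : R :=
  ∑ n ∈ (Fintype.piFinset fun i : Fin d => if i ∈ S then Finset.Ioo a b else {0}).filter
      (fun n => ∀ i ∈ S, ∀ j ∈ S, i < j → n i < n j),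
    ∏ i ∈ S, χ i (n i)

section Profiles

variable {d : ℕ}

def IsFloorProfile (E : Finset (Fin d)) (Q : Fin d → ℤ) : Prop :=
  ∀ i j : Fin d, (i : ℕ) + 1 = j → (j ∈ E → Q i < Q j) ∧ (j ∉ E → Q i ≤ Q j)

instance (E : Finset (Fin d)) (Q : Fin d → ℤ) : Decidable (IsFloorProfile E Q) := by
  unfold IsFloorProfile; infer_instance

namespace IsFloorProfile

variable {E : Finset (Fin d)} {Q : Fin d → ℤ}

theorem monotone (hQ : IsFloorProfile E Q) : Monotone Q := by
  cases d with
  | zero => exact fun i => i.elim0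
  | succ k =>
    refine Fin.monotone_iff_le_succ.2 fun i => ?_
    by_cases hi : i.succ ∈ E
    · exact ((hQ _ _ (by simp)).1 hi).le
    · exact (hQ _ _ (by simp)).2 hi

theorem lt_of_lt_of_mem (hQ : IsFloorProfile E Q) {i j : Fin d} (hij : i < j) (hj : j ∈ E) :
    Q i < Q j := by
  cases d with
  | zero => exact i.elim0
  | succ k =>
    obtain ⟨j, rfl⟩ := Fin.exists_succ_eq.2 ((Fin.zero_le i).trans_lt hij).ne'
    calc Q i ≤ Q j.castSucc := hQ.monotone (Fin.le_castSucc_iff.2 hij)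
      _ < Q j.succ := (hQ _ _ (by simp)).1 hj

end IsFloorProfile

variable {M : ℤ} {E : Finset (Fin d)} {Q : Fin d → ℤ}

def floorSplit (M : ℤ) (n : Fin d → ℤ) : Finset (Fin d) × (Fin d → ℤ) :=
  (univ.filter fun i => M ∣ n i, fun i => n i / M)

noncomputable def floorCells (M : ℤ) (E : Finset (Fin d)) (Q : Fin d → ℤ) (i : Fin d) :
    Finset ℤ :=
  if i ∈ E then {Q i * M} else Ioo (Q i * M) ((Q i + 1) * M)

theorem mem_floorCells_of_mem {i : Fin d} (hi : i ∈ E) {x : ℤ} :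
    x ∈ floorCells M E Q i ↔ x = Q i * M := by
  rw [floorCells, if_pos hi, mem_singleton]

theorem mem_floorCells_of_notMem {i : Fin d} (hi : i ∉ E) {x : ℤ} :
    x ∈ floorCells M E Q i ↔ Q i * M < x ∧ x < (Q i + 1) * M := by
  rw [floorCells, if_neg hi, mem_Ioo]

theorem mem_floorCells_iff (hM : 0 < M) {i : Fin d} {x : ℤ} :
    x ∈ floorCells M E Q i ↔ (M ∣ x ↔ i ∈ E) ∧ x / M = Q i := by
  rw [Int.ediv_eq_iff_of_pos hM]
  by_cases hi : i ∈ E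
  · rw [mem_floorCells_of_mem hi, iff_true_intro hi, iff_true]
    constructor
    · rintro rfl
      exact ⟨dvd_mul_left M (Q i), le_rfl, by linarith⟩
    · rintro ⟨⟨c, rfl⟩, hlow, hhigh⟩
      have h1 : Q i ≤ c := le_of_mul_le_mul_right (by linarith) hM
      have h2 : c < Q i + 1 := lt_of_mul_lt_mul_right (by linarith) hM.le
      rw [show c = Q i by omega, mul_comm]
  · rw [mem_floorCells_of_notMem hi, iff_false_intro hi, iff_false]
    constructor
    · rintro ⟨hlow, hhigh⟩
      refine ⟨fun ⟨c, hc⟩ => ?_, hlow.le, by linarith⟩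
      subst hc
      have h1 : Q i < c := lt_of_mul_lt_mul_right (by linarith) hM.le
      have h2 : c < Q i + 1 := lt_of_mul_lt_mul_right (by linarith) hM.le
      omega
    · rintro ⟨hndvd, hlow, hhigh⟩
      have hne : Q i * M ≠ x := fun hx => hndvd ⟨Q i, by rw [← hx, mul_comm]⟩
      exact ⟨lt_of_le_of_ne hlow hne, by linarith⟩

theorem floorSplit_eq_iff (hM : 0 < M) {n : Fin d → ℤ} :
    floorSplit M n = (E, Q) ↔ n ∈ Fintype.piFinset (floorCells M E Q) := by
  simp only [floorSplit, Prod.mk.injEq, Fintype.mem_piFinset, mem_floorCells_iff hM, forall_and,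
    Finset.ext_iff, funext_iff, mem_filter, mem_univ, true_and]

theorem isFloorProfile_floorSplit (hM : 0 < M) {n : Fin d → ℤ} (hn : StrictMono n) :
    IsFloorProfile (floorSplit M n).1 (floorSplit M n).2 := by
  intro i j hij
  have hlt : n i < n j := hn (Fin.lt_def.2 (by omega))
  refine ⟨fun hj => ?_, fun _ => Int.ediv_le_ediv hM hlt.le⟩
  have hj : M ∣ n j := (mem_filter.1 hj).2
  refine lt_of_mul_lt_mul_right ?_ hM.le
  calc n i / M * M ≤ n i := Int.ediv_mul_le _ hM.ne'
    _ < n j := hlt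
    _ = n j / M * M := (Int.ediv_mul_cancel hj).symm

theorem strictMono_iff_of_floorSplit_eq (hM : 0 < M) {n : Fin d → ℤ} (hQ : IsFloorProfile E Q)
    (hn : floorSplit M n = (E, Q)) :
    StrictMono n ↔ ∀ i ∉ E, ∀ j ∉ E, Q i = Q j → i < j → n i < n j := by
  refine ⟨fun h i _ j _ _ hij => h hij, fun hblock i j hij => ?_⟩
  have hcell := Fintype.mem_piFinset.1 ((floorSplit_eq_iff hM).1 hn)
  have hbounds k : Q k * M ≤ n k ∧ n k < Q k * M + M :=
    (Int.ediv_eq_iff_of_pos hM).1 (congrFun (congrArg Prod.snd hn) k)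
  rcases (hQ.monotone hij.le).lt_or_eq with hlt | heq
  · calc n i < Q i * M + M := (hbounds i).2
      _ = (Q i + 1) * M := by ring
      _ ≤ Q j * M := by gcongr; omega
      _ ≤ n j := (hbounds j).1
  · have hj : j ∉ E := fun hj => (hQ.lt_of_lt_of_mem hij hj).ne heq
    have hnj : Q j * M < n j := ((mem_floorCells_of_notMem hj).1 (hcell j)).1
    by_cases hi : i ∈ E
    · rw [(mem_floorCells_of_mem hi).1 (hcell i), heq]
      exact hnj
    · exact hblock i hi j hj heq hij

noncomputable def increasingChains (a b : ℤ) : Finset (Fin d → ℤ) :=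
  (Fintype.piFinset fun _ => Ioo a b).filter fun n => ∀ i j, i < j → n i < n j

noncomputable def floorProfiles (N : ℤ) : Finset (Finset (Fin d) × (Fin d → ℤ)) :=
  (univ ×ˢ Fintype.piFinset fun _ => Ico 0 N).filter
    fun p => (∀ i ∈ p.1, 1 ≤ p.2 i) ∧ IsFloorProfile p.1 p.2

noncomputable def blockFamilies (M : ℤ) (E : Finset (Fin d)) (Q : Fin d → ℤ) :
    Finset (Fin d → ℤ) :=
  (Fintype.piFinset (floorCells M E Q)).filter
    fun n => ∀ i ∉ E, ∀ j ∉ E, Q i = Q j → i < j → n i < n j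

theorem mem_floorProfiles {N : ℤ} :
    (E, Q) ∈ floorProfiles N ↔ Q ∈ Fintype.piFinset (fun _ => Ico 0 N) ∧
      (∀ i ∈ E, 1 ≤ Q i) ∧ IsFloorProfile E Q := by
  rw [floorProfiles, mem_filter, mem_product, and_iff_right (mem_univ _)]

theorem chainSumOn_univ {R : Type*} [CommRing R] (χ : Fin d → ℤ → R) (a b : ℤ) :
    chainSumOn χ univ a b = ∑ n ∈ increasingChains a b, ∏ i, χ i (n i) := by
  simp [chainSumOn, increasingChains]

theorem floorSplit_mem_floorProfiles {N : ℤ} (hM : 0 < M) {n : Fin d → ℤ}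
    (hn : n ∈ increasingChains 0 (N * M)) : floorSplit M n ∈ floorProfiles N := by
  rw [increasingChains, mem_filter, Fintype.mem_piFinset] at hn
  obtain ⟨hrange, hmono⟩ := hn
  have hpos i : 0 < n i := (mem_Ioo.1 (hrange i)).1
  refine mem_floorProfiles.2 ⟨Fintype.mem_piFinset.2 fun i => ?_,
    fun i hi => ?_, isFloorProfile_floorSplit hM hmono⟩
  · exact mem_Ico.2 ⟨Int.ediv_nonneg (hpos i).le hM.le,
      (Int.ediv_lt_iff_lt_mul hM).2 (mem_Ioo.1 (hrange i)).2⟩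
  · exact (Int.le_ediv_iff_mul_le hM).2 (by
      simpa using Int.le_of_dvd (hpos i) (mem_filter.1 hi).2)

theorem filter_floorSplit_eq {N : ℤ} (hM : 0 < M) (hp : (E, Q) ∈ floorProfiles N) :
    (increasingChains 0 (N * M)).filter (fun n => floorSplit M n = (E, Q)) =
      blockFamilies M E Q := by
  obtain ⟨hrange, hE, hQ⟩ := mem_floorProfiles.1 hp
  rw [Fintype.mem_piFinset] at hrange
  ext n
  simp only [mem_filter, increasingChains, blockFamilies, Fintype.mem_piFinset]
  constructor
  · rintro ⟨⟨-, hmono⟩, hsplit⟩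
    exact ⟨Fintype.mem_piFinset.1 ((floorSplit_eq_iff hM).1 hsplit),
      fun i _ j _ _ hij => hmono i j hij⟩
  · rintro ⟨hcell, hblock⟩
    have hsplit := (floorSplit_eq_iff hM).2 (Fintype.mem_piFinset.2 hcell)
    refine ⟨⟨fun i => mem_Ioo.2 ?_, (strictMono_iff_of_floorSplit_eq hM hQ hsplit).2 hblock⟩,
      hsplit⟩
    obtain ⟨hQ0, hQN⟩ := mem_Ico.1 (hrange i)
    have hup : (Q i + 1) * M ≤ N * M := by gcongr; omega
    by_cases hi : i ∈ E
    · rw [(mem_floorCells_of_mem hi).1 (hcell i)]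
      constructor <;> nlinarith [hE i hi]
    · obtain ⟨hlow, hhigh⟩ := (mem_floorCells_of_notMem hi).1 (hcell i)
      constructor <;> nlinarith

end Profiles

section Blocks

variable {d : ℕ} {M : ℤ} {E : Finset (Fin d)} {Q : Fin d → ℤ}

def block (E : Finset (Fin d)) (Q : Fin d → ℤ) (q : ℤ) : Finset (Fin d) :=
  (univ \ E).filter fun i => Q i = q

theorem mem_block {q : ℤ} {i : Fin d} : i ∈ block E Q q ↔ i ∉ E ∧ Q i = q := by
  simp [block]

theorem apply_mem_image_of_notMem {i : Fin d} (hi : i ∉ E) : Q i ∈ (univ \ E).image Q :=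
  mem_image_of_mem Q (by simpa using hi)

theorem prod_univ_eq_prod_mul_prod_block {α : Type*} [CommMonoid α] (f : Fin d → α) :
    ∏ i, f i = (∏ i ∈ E, f i) * ∏ q ∈ (univ \ E).image Q, ∏ i ∈ block E Q q, f i := by
  unfold block
  rw [prod_fiberwise_of_maps_to (fun i hi => mem_image_of_mem Q hi), mul_comm,
    prod_sdiff (subset_univ E)]

noncomputable def chainFamilies (S : Finset (Fin d)) (a b : ℤ) : Finset (Fin d → ℤ) :=
  (Fintype.piFinset fun i => if i ∈ S then Ioo a b else {0}).filter
    fun n => ∀ i ∈ S, ∀ j ∈ S, i < j → n i < n j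

theorem chainSumOn_eq_sum_chainFamilies {R : Type*} [CommRing R] (χ : Fin d → ℤ → R)
    (S : Finset (Fin d)) (a b : ℤ) :
    chainSumOn χ S a b = ∑ n ∈ chainFamilies S a b, ∏ i ∈ S, χ i (n i) :=
  rfl

variable (M E Q) in
def glueBlocks (p : ∀ q ∈ (univ \ E).image Q, Fin d → ℤ) (i : Fin d) : ℤ :=
  if hi : i ∈ E then Q i * M else p (Q i) (apply_mem_image_of_notMem hi) i

variable (E Q) in
def restrictToBlocks (n : Fin d → ℤ) (q : ℤ) (_ : q ∈ (univ \ E).image Q) (i : Fin d) :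
    ℤ :=
  if i ∈ block E Q q then n i else 0

variable (M E Q) in
noncomputable def blockChainFamilies : Finset (∀ q ∈ (univ \ E).image Q, Fin d → ℤ) :=
  ((univ \ E).image Q).pi fun q => chainFamilies (block E Q q) (q * M) ((q + 1) * M)

theorem glueBlocks_of_mem {p : ∀ q ∈ (univ \ E).image Q, Fin d → ℤ} {i : Fin d}
    (hi : i ∈ E) : glueBlocks M E Q p i = Q i * M :=
  dif_pos hi

theorem glueBlocks_of_mem_block {p : ∀ q ∈ (univ \ E).image Q, Fin d → ℤ} {q : ℤ}
    (hq : q ∈ (univ \ E).image Q) {i : Fin d} (hi : i ∈ block E Q q) :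
    glueBlocks M E Q p i = p q hq i := by
  obtain ⟨hiE, rfl⟩ := mem_block.1 hi
  exact dif_neg hiE

theorem restrictToBlocks_glueBlocks {p : ∀ q ∈ (univ \ E).image Q, Fin d → ℤ}
    (hp : p ∈ blockChainFamilies M E Q) : restrictToBlocks E Q (glueBlocks M E Q p) = p := by
  funext q hq i
  by_cases hi : i ∈ block E Q q
  · rw [restrictToBlocks, if_pos hi, glueBlocks_of_mem_block hq hi]
  · have := Fintype.mem_piFinset.1 (mem_filter.1 (mem_pi.1 hp q hq)).1 i
    rw [if_neg hi, mem_singleton] at this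
    rw [restrictToBlocks, if_neg hi, this]

theorem glueBlocks_restrictToBlocks {n : Fin d → ℤ} (hn : n ∈ blockFamilies M E Q) :
    glueBlocks M E Q (restrictToBlocks E Q n) = n := by
  funext i
  by_cases hi : i ∈ E
  · rw [glueBlocks_of_mem hi]
    exact ((mem_floorCells_of_mem hi).1 (Fintype.mem_piFinset.1 (mem_filter.1 hn).1 i)).symm
  · have hiB : i ∈ block E Q (Q i) := mem_block.2 ⟨hi, rfl⟩
    rw [glueBlocks_of_mem_block (apply_mem_image_of_notMem hi) hiB, restrictToBlocks, if_pos hiB]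

theorem glueBlocks_mem_blockFamilies {p : ∀ q ∈ (univ \ E).image Q, Fin d → ℤ}
    (hp : p ∈ blockChainFamilies M E Q) : glueBlocks M E Q p ∈ blockFamilies M E Q := by
  have hblock {i : Fin d} (hi : i ∉ E) :=
    mem_filter.1 (mem_pi.1 hp (Q i) (apply_mem_image_of_notMem hi))
  have hiB {i : Fin d} (hi : i ∉ E) : i ∈ block E Q (Q i) := mem_block.2 ⟨hi, rfl⟩
  refine mem_filter.2 ⟨Fintype.mem_piFinset.2 fun i => ?_, fun i hi j hj hij hlt => ?_⟩
  · by_cases hi : i ∈ E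
    · rw [glueBlocks_of_mem hi, mem_floorCells_of_mem hi]
    · rw [glueBlocks_of_mem_block _ (hiB hi), mem_floorCells_of_notMem hi, ← mem_Ioo]
      simpa [hiB hi] using Fintype.mem_piFinset.1 (hblock hi).1 i
  · have hjB : j ∈ block E Q (Q i) := mem_block.2 ⟨hj, hij.symm⟩
    rw [glueBlocks_of_mem_block _ (hiB hi), glueBlocks_of_mem_block _ hjB]
    exact (hblock hi).2 i (hiB hi) j hjB hlt

theorem restrictToBlocks_mem_blockChainFamilies {n : Fin d → ℤ}
    (hn : n ∈ blockFamilies M E Q) : restrictToBlocks E Q n ∈ blockChainFamilies M E Q := by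
  obtain ⟨hcell, hblock⟩ := mem_filter.1 hn
  refine mem_pi.2 fun q hq =>
    mem_filter.2 ⟨Fintype.mem_piFinset.2 fun i => ?_, fun i hi j hj hij => ?_⟩
  · by_cases hi : i ∈ block E Q q
    · obtain ⟨hiE, rfl⟩ := mem_block.1 hi
      rw [restrictToBlocks, if_pos hi, if_pos hi, mem_Ioo, ← mem_floorCells_of_notMem hiE]
      exact Fintype.mem_piFinset.1 hcell i
    · rw [restrictToBlocks, if_neg hi, if_neg hi, mem_singleton]
  · obtain ⟨hiE, rfl⟩ := mem_block.1 hi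
    obtain ⟨hjE, hQj⟩ := mem_block.1 hj
    rw [restrictToBlocks, restrictToBlocks, if_pos hi, if_pos hj]
    exact hblock i hiE j hjE hQj.symm hij

theorem prod_glueBlocks {α : Type*} [CommMonoid α] (f : Fin d → ℤ → α)
    (p : ∀ q ∈ (univ \ E).image Q, Fin d → ℤ) :
    ∏ i, f i (glueBlocks M E Q p i) = (∏ i ∈ E, f i (Q i * M)) *
      ∏ x ∈ ((univ \ E).image Q).attach, ∏ i ∈ block E Q x, f i (p x.1 x.2 i) := by
  rw [prod_univ_eq_prod_mul_prod_block (E := E) (Q := Q),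
    ← prod_attach _ fun q => ∏ i ∈ block E Q q, f i (glueBlocks M E Q p i)]
  congr 1
  · exact prod_congr rfl fun i hi => by rw [glueBlocks_of_mem hi]
  · exact prod_congr rfl fun x _ => prod_congr rfl fun i hi => by
      rw [glueBlocks_of_mem_block x.2 hi]

theorem sum_blockFamilies {R : Type*} [CommRing R] (χ : Fin d → ℤ → R) :
    ∑ n ∈ blockFamilies M E Q, ∏ i, χ i (n i) =
      (∏ i ∈ E, χ i (Q i * M)) *
        ∏ q ∈ (univ \ E).image Q, chainSumOn χ (block E Q q) (q * M) ((q + 1) * M) := by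
  simp only [chainSumOn_eq_sum_chainFamilies]
  rw [prod_sum, mul_sum]
  exact (sum_nbij' (glueBlocks M E Q) (restrictToBlocks E Q)
    (fun _ => glueBlocks_mem_blockFamilies) (fun _ => restrictToBlocks_mem_blockChainFamilies)
    (fun _ => restrictToBlocks_glueBlocks) (fun _ => glueBlocks_restrictToBlocks)
    fun p _ => (prod_glueBlocks χ p).symm).symm

end Blocks

theorem mhs_multiplication_general {R : Type*} [CommRing R] (N M : ℤ) (hM : 1 ≤ M)
    (d : ℕ) (χ : Fin d → ℤ → R) :
    chainSumOn χ Finset.univ 0 (N * M)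
      = ∑ E : Finset (Fin d),
          ∑ Q ∈ (Fintype.piFinset fun _ : Fin d => Finset.Ico (0 : ℤ) N).filter
              (fun Q => (∀ i ∈ E, 1 ≤ Q i) ∧
                ∀ i j : Fin d, (i : ℕ) + 1 = (j : ℕ) →
                  (j ∈ E → Q i < Q j) ∧ (j ∉ E → Q i ≤ Q j)),
            (∏ i ∈ E, χ i (Q i * M)) *
              ∏ q ∈ (Finset.univ \ E).image Q,
                chainSumOn χ ((Finset.univ \ E).filter (fun i => Q i = q))
                  (q * M) ((q + 1) * M) := by
  have hM0 : 0 < M := hM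
  calc chainSumOn χ univ 0 (N * M)
      = ∑ n ∈ increasingChains 0 (N * M), ∏ i, χ i (n i) := chainSumOn_univ χ 0 (N * M)
    _ = ∑ p ∈ floorProfiles N,
          ∑ n ∈ (increasingChains 0 (N * M)).filter (floorSplit M · = p), ∏ i, χ i (n i) :=
      (sum_fiberwise_of_maps_to (fun _ hn => floorSplit_mem_floorProfiles hM0 hn) _).symm
    _ = ∑ p ∈ floorProfiles N, (∏ i ∈ p.1, χ i (p.2 i * M)) *
          ∏ q ∈ (univ \ p.1).image p.2, chainSumOn χ (block p.1 p.2 q) (q * M) ((q + 1) * M) :=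
      sum_congr rfl fun _ hp => by rw [filter_floorSplit_eq hM0 hp, sum_blockFamilies]
    _ = _ := sum_finset_product _ _ _ fun _ => by
      rw [mem_floorProfiles, mem_filter, and_iff_right (mem_univ _)]; rfl

/-- Multiplication of upper bounds.  The sum `∑_{0<n_1<⋯<n_d<NM} χ_1(n_1)⋯χ_d(n_d)` is
decomposed by grouping the indices according to whether `M ∣ n_i` (those `i` form the set `E`,
with `n_i = Q_i·M`) and, for the remaining indices, according to the value `Q_i = ⌊n_i/M⌋`.
The data of the subset `E`, of the block data (ordered partitions of the gaps of `E` into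
nonempty blocks of consecutive indices), of the chain `0 = m_0 < m_1 < ⋯ < m_{d'} < N` and of
the values `m_t ≤ q_{t,1} < ⋯ < q_{t,j_t} ≤ m_{t+1}−1` is encoded by the pair `(E, Q)` where
`Q : Fin d → {0,…,N−1}` records `m_t` at the `t`-th element of `E` and `q_{t,x}` on the block
`P_t^x`; the constraints are: `1 ≤ Q_i` for `i ∈ E`, and for adjacent indices `i, j = i+1`,
`Q_i < Q_j` when `j ∈ E` and `Q_i ≤ Q_j` when `j ∉ E`.  The blocks `P_t^x` are then exactly the
fibers of `Q` on the complement of `E` (all carrying pairwise distinct values `q`), and each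
block contributes the chain sum `∑_{qM<n_{u}<(q+1)M, increasing} ∏_{u} χ_u(n_u)`. -/
theorem mhs_multiplication {R : Type*} [CommRing R] (N M : ℤ) (hN : 1 ≤ N) (hM : 1 ≤ M)
    (d : ℕ) (hd : 1 ≤ d) (χ : Fin d → ℤ → R) :
    chainSumOn χ Finset.univ 0 (N * M)
      = ∑ E : Finset (Fin d),
          ∑ Q ∈ (Fintype.piFinset fun _ : Fin d => Finset.Ico (0 : ℤ) N).filter
              (fun Q => (∀ i ∈ E, 1 ≤ Q i) ∧
                ∀ i j : Fin d, (i : ℕ) + 1 = (j : ℕ) →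
                  (j ∈ E → Q i < Q j) ∧ (j ∉ E → Q i ≤ Q j)),
            (∏ i ∈ E, χ i (Q i * M)) *
              ∏ q ∈ (Finset.univ \ E).image Q,
                chainSumOn χ ((Finset.univ \ E).filter (fun i => Q i = q))
                  (q * M) ((q + 1) * M) :=
  mhs_multiplication_general N M hM d χ
end

section
/- Let p be a prime, d ≥ 1, N ≥ 2 integers, and let χ_1,…,χ_d be p-adic characters with Taylor coefficients c_{i,l} = χ_i^{((l))}(1) ∈ ℤ_p at 1. Every integer n > 0 is uniquely n = p^v(pq+r) with v, q ≥ 0 and r ∈ {1,…,p−1}. Then in ℚ_p: ∑_{0<n_1<⋯<n_d<N} ∏_{i=1}^d χ_i(n_i/N) = ∑ over all tuples (v_i, q_i, r_i)_{i=1,…,d} ∈ (ℕ × ℕ × {1,…,p−1})^d satisfying 0 < p^{v_1}(pq_1+r_1) < ⋯ < p^{v_d}(pq_d+r_d) < N, of ∑_{l_1,…,l_d ≥ 0} ∏_{i=1}^d χ_i(p^{v_i}/N) · χ_i(r_i) · r_i^{−l_i} · c_{i,l_i} · (p·q_i)^{l_i}, the whole family being summable in ℚ_p. -/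
/-!
Write every `n > 0` uniquely as `p^v (p q + r)` with `0 < r < p`; this identifies the chains
`0 < n_1 < ⋯ < n_d < N` with the admissible triples `(v, q, r)`, of which there are finitely
many. For a fixed triple, `p^v (p q + r) / N = (p^v / N) · r · (1 + x)` with `x = p q / r` and
`‖x‖ ≤ 1/p`, so multiplicativity and the Taylor series of `χ_i` at `1` expand each factor
`χ_i(n_i / N)` as a series in `l` whose terms are bounded by a geometric series. Absolutely
convergent series can be multiplied termwise, which expands the product over `i` as a sum over
`l ∈ ℕ^d`; adding up the finitely many triples gives the whole family.
-/

open Finset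

/-- The finite set of strictly increasing chains `0 < n_1 < ⋯ < n_d < N` of natural numbers. -/
def chainsN (d N : ℕ) : Finset (Fin d → ℕ) :=
  (Fintype.piFinset fun _ : Fin d => Finset.Ioo 0 N).filter
    (fun n => ∀ i j : Fin d, i < j → n i < n j)

theorem HasSum.mul_of_summable_norm {R ι ι' : Type*} [NormedRing R] [CompleteSpace R]
    {f : ι → R} {g : ι' → R} {a b : R} (hf : HasSum f a) (hg : HasSum g b)
    (hf' : Summable fun x => ‖f x‖)
    (hg' : Summable fun x => ‖g x‖) : HasSum (fun x : ι × ι' => f x.1 * g x.2) (a * b) :=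
  hf.mul hg (summable_mul_of_summable_norm hf' hg')

section FinProd

variable {R β : Type*} [NormedCommRing R]

theorem prod_apply_consEquiv {d : ℕ} (f : Fin (d + 1) → β → R) (x : β × (Fin d → β)) :
    ∏ i, f i ((Fin.consEquiv fun _ => β) x i) = f 0 x.1 * ∏ i : Fin d, f i.succ (x.2 i) := by
  simp [Fin.prod_univ_succ, Fin.consEquiv]

theorem summable_norm_fin_prod {d : ℕ} {f : Fin d → β → R}
    (hf : ∀ i, Summable fun b => ‖f i b‖) : Summable fun b : Fin d → β => ‖∏ i, f i (b i)‖ := by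
  induction d with
  | zero => exact .of_finite
  | succ d ih =>
    rw [← (Fin.consEquiv fun _ => β).summable_iff]
    simpa only [Function.comp_def, prod_apply_consEquiv] using
      (hf 0).mul_norm (ih fun i => hf i.succ)

theorem hasSum_fin_prod [CompleteSpace R] {d : ℕ} {f : Fin d → β → R} {a : Fin d → R}
    (hf : ∀ i, HasSum (f i) (a i)) (hnorm : ∀ i, Summable fun b => ‖f i b‖) :
    HasSum (fun b : Fin d → β => ∏ i, f i (b i)) (∏ i, a i) := by
  induction d with
  | zero => simp
  | succ d ih =>
    have htail := ih (fun i => hf i.succ) fun i => hnorm i.succ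
    have hprod := (hf 0).mul_of_summable_norm htail (hnorm 0)
      (summable_norm_fin_prod fun i => hnorm i.succ)
    rw [← (Fin.consEquiv fun _ => β).hasSum_iff, Fin.prod_univ_succ]
    simpa only [Function.comp_def, prod_apply_consEquiv] using hprod

end FinProd

theorem hasSum_ite_fst_mem {β γ M : Type*} [DecidableEq β] [AddCommMonoid M]
    [TopologicalSpace M] [ContinuousAdd M] (A : Finset β) {g : β → γ → M} {a : β → M}
    (h : ∀ s ∈ A, HasSum (g s) (a s)) :
    HasSum (fun x : β × γ => if x.1 ∈ A then g x.1 x.2 else 0) (∑ s ∈ A, a s) := by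
  have hfiber : ∀ s ∈ A, HasSum (fun x : β × γ => if x.1 = s then g s x.2 else 0) (a s) := by
    intro s hs
    refine ((Prod.mk_right_injective s).hasSum_iff fun x hx => if_neg ?_).mp
      (by simpa [Function.comp_def] using h s hs)
    exact fun hxs => hx ⟨x.2, Prod.ext hxs.symm rfl⟩
  convert hasSum_sum hfiber using 1
  ext x
  rw [Finset.sum_ite_eq]

theorem mem_chainsN {d N : ℕ} {n : Fin d → ℕ} :
    n ∈ chainsN d N ↔ (∀ i, 0 < n i ∧ n i < N) ∧ ∀ i j : Fin d, i < j → n i < n j := by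
  simp [chainsN]

section VQR

variable {p : ℕ}

theorem not_dvd_mul_add_of_pos_of_lt (q : ℕ) {r : ℕ} (hr₀ : 0 < r) (hrp : r < p) :
    ¬ p ∣ p * q + r :=
  (Nat.dvd_add_right (dvd_mul_right p q)).not.mpr (Nat.not_dvd_of_pos_of_lt hr₀ hrp)

theorem pow_mul_mul_ordCompl_div_add_mod (n : ℕ) :
    p ^ n.factorization p * (p * (ordCompl[p] n / p) + ordCompl[p] n % p) = n := by
  rw [Nat.div_add_mod, Nat.ordProj_mul_ordCompl_eq_self]

variable [hp : Fact p.Prime]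

theorem factorization_pow_mul_mul_add (v q : ℕ) {r : ℕ} (hr₀ : 0 < r) (hrp : r < p) :
    (p ^ v * (p * q + r)).factorization p = v := by
  rw [Nat.factorization_mul (pow_ne_zero v hp.out.ne_zero) (by omega),
    Finsupp.add_apply, hp.out.factorization_pow, Finsupp.single_eq_same,
    Nat.factorization_eq_zero_of_not_dvd (not_dvd_mul_add_of_pos_of_lt q hr₀ hrp), add_zero]

theorem ordCompl_pow_mul_mul_add (v q : ℕ) {r : ℕ} (hr₀ : 0 < r) (hrp : r < p) :
    ordCompl[p] (p ^ v * (p * q + r)) = p * q + r := by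
  rw [factorization_pow_mul_mul_add v q hr₀ hrp,
    Nat.mul_div_cancel_left _ (pow_pos hp.out.pos v)]

theorem pos_ordCompl_mod {n : ℕ} (hn : n ≠ 0) : 0 < ordCompl[p] n % p :=
  Nat.pos_of_ne_zero fun h => Nat.not_dvd_ordCompl hp.out hn (Nat.dvd_of_mod_eq_zero h)

end VQR

section Chains

variable (p : ℕ) {d : ℕ}

def ofVQR (s : (Fin d → ℕ) × (Fin d → ℕ) × (Fin d → ℕ)) : Fin d → ℕ :=
  fun i => p ^ s.1 i * (p * s.2.1 i + s.2.2 i)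

def toVQR (n : Fin d → ℕ) : (Fin d → ℕ) × (Fin d → ℕ) × (Fin d → ℕ) :=
  (fun i => (n i).factorization p, fun i => ordCompl[p] (n i) / p, fun i => ordCompl[p] (n i) % p)

/-- Spelled out rather than as `ofVQR p s ∈ chainsN d N`, so that it unfolds to the condition in
`mhs_padic_expansion`, decidability instance included. -/
abbrev IsAdmissibleVQR (N : ℕ) (s : (Fin d → ℕ) × (Fin d → ℕ) × (Fin d → ℕ)) : Prop :=
  (∀ i, 1 ≤ s.2.2 i ∧ s.2.2 i ≤ p - 1) ∧ (∀ i, 0 < ofVQR p s i) ∧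
    (∀ i j : Fin d, i < j → ofVQR p s i < ofVQR p s j) ∧ (∀ i, ofVQR p s i < N)

variable {p}

theorem ofVQR_toVQR (n : Fin d → ℕ) : ofVQR p (toVQR p n) = n :=
  funext fun i => pow_mul_mul_ordCompl_div_add_mod (n i)

theorem toVQR_injective : Function.Injective (toVQR (d := d) p) :=
  Function.LeftInverse.injective ofVQR_toVQR

theorem toVQR_ofVQR [hp : Fact p.Prime] {s : (Fin d → ℕ) × (Fin d → ℕ) × (Fin d → ℕ)}
    (hr : ∀ i, 0 < s.2.2 i ∧ s.2.2 i < p) : toVQR p (ofVQR p s) = s := by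
  have hcompl : ∀ i, ordCompl[p] (ofVQR p s i) = p * s.2.1 i + s.2.2 i := fun i =>
    ordCompl_pow_mul_mul_add _ _ (hr i).1 (hr i).2
  refine Prod.ext (funext fun i => ?_) (Prod.ext (funext fun i => ?_) (funext fun i => ?_))
  · exact factorization_pow_mul_mul_add _ _ (hr i).1 (hr i).2
  · dsimp only [toVQR]
    rw [hcompl, Nat.mul_add_div hp.out.pos, Nat.div_eq_of_lt (hr i).2, add_zero]
  · dsimp only [toVQR]
    rw [hcompl, Nat.mul_add_mod, Nat.mod_eq_of_lt (hr i).2]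

theorem mem_image_toVQR_chainsN [hp : Fact p.Prime] {N : ℕ}
    {s : (Fin d → ℕ) × (Fin d → ℕ) × (Fin d → ℕ)} :
    s ∈ (chainsN d N).image (toVQR p) ↔ IsAdmissibleVQR p N s := by
  have hp₀ := hp.out.pos
  constructor
  · rintro hs
    obtain ⟨n, hn, rfl⟩ := mem_image.mp hs
    obtain ⟨hbound, hmono⟩ := mem_chainsN.mp hn
    simp only [IsAdmissibleVQR, ofVQR_toVQR]
    refine ⟨fun i => ?_, fun i => (hbound i).1, hmono, fun i => (hbound i).2⟩
    have hr₀ := pos_ordCompl_mod (p := p) (hbound i).1.ne'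
    have hrp := Nat.mod_lt (ordCompl[p] (n i)) hp₀
    exact ⟨hr₀, by dsimp only [toVQR]; omega⟩
  · rintro ⟨hr, hpos, hmono, hlt⟩
    refine mem_image.mpr ⟨ofVQR p s, mem_chainsN.mpr ⟨fun i => ⟨hpos i, hlt i⟩, hmono⟩, ?_⟩
    exact toVQR_ofVQR fun i => ⟨(hr i).1, by have := hr i; omega⟩

theorem sum_chainsN_eq_sum_image_toVQR {M : Type*} [AddCommMonoid M] (N : ℕ)
    (f : (Fin d → ℕ) → M) :
    ∑ n ∈ chainsN d N, f n = ∑ s ∈ (chainsN d N).image (toVQR p), f (ofVQR p s) := by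
  rw [sum_image fun n _ m _ h => toVQR_injective h]
  simp only [ofVQR_toVQR]

end Chains

theorem mul_zpow_neg_mul_mul_pow {K : Type*} [Field K] (A c y : K) {r : K} (hr : r ≠ 0) (l : ℕ) :
    A * r ^ (-(l : ℤ)) * c * y ^ l = A * (c * (y / r) ^ l) := by
  rw [zpow_neg, zpow_natCast, div_pow]
  field_simp

section Character

variable {p : ℕ} [hp : Fact p.Prime]

theorem norm_natCast_eq_one_of_pos_of_lt {r : ℕ} (hr₀ : 0 < r) (hrp : r < p) :
    ‖(r : ℚ_[p])‖ = 1 :=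
  Padic.norm_natCast_eq_one_iff.mpr
    ((Nat.Prime.coprime_iff_not_dvd hp.out).mpr (Nat.not_dvd_of_pos_of_lt hr₀ hrp))

theorem norm_natCast_mul_div_le (q : ℕ) {r : ℕ} (hr₀ : 0 < r) (hrp : r < p) :
    ‖((p * q : ℕ) : ℚ_[p]) / r‖ ≤ (p : ℝ)⁻¹ := by
  rw [norm_div, norm_natCast_eq_one_of_pos_of_lt hr₀ hrp, div_one, Nat.cast_mul, norm_mul,
    Padic.norm_p]
  exact mul_le_of_le_one_right (by positivity) (IsUltrametricDist.norm_natCast_le_one ℚ_[p] q)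

theorem summable_norm_coeff_mul_pow (c : ℕ → ℤ_[p]) {x : ℚ_[p]} (hx : ‖x‖ ≤ (p : ℝ)⁻¹) :
    Summable fun l => ‖(c l : ℚ_[p]) * x ^ l‖ := by
  have hp₁ : (p : ℝ)⁻¹ < 1 := inv_lt_one_of_one_lt₀ (by exact_mod_cast hp.out.one_lt)
  refine .of_nonneg_of_le (fun _ => norm_nonneg _) (fun l => ?_)
    (summable_geometric_of_lt_one (by positivity) hp₁)
  rw [norm_mul, norm_pow, PadicInt.padic_norm_e_of_padicInt]
  exact (mul_le_of_le_one_left (by positivity) (c l).norm_le_one).trans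
    (pow_le_pow_left₀ (norm_nonneg _) hx l)

noncomputable def expansionCoeff (χ : ℚ_[p] → ℚ_[p]) (c : ℕ → ℤ_[p]) (N v q r l : ℕ) : ℚ_[p] :=
  χ ((p : ℚ_[p]) ^ v / (N : ℚ_[p])) * χ (r : ℚ_[p]) * (r : ℚ_[p]) ^ (-(l : ℤ)) *
    (c l : ℚ_[p]) * ((p * q : ℕ) : ℚ_[p]) ^ l

variable {χ : ℚ_[p] → ℚ_[p]} {c : ℕ → ℤ_[p]}

theorem expansionCoeff_eq (N v q : ℕ) {r : ℕ} (hr₀ : 0 < r) (l : ℕ) :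
    expansionCoeff χ c N v q r l = χ ((p : ℚ_[p]) ^ v / (N : ℚ_[p])) * χ (r : ℚ_[p]) *
      ((c l : ℚ_[p]) * (((p * q : ℕ) : ℚ_[p]) / r) ^ l) :=
  mul_zpow_neg_mul_mul_pow _ _ _ (Nat.cast_ne_zero.mpr hr₀.ne') l

theorem summable_norm_expansionCoeff (N v q : ℕ) {r : ℕ} (hr₀ : 0 < r) (hrp : r < p) :
    Summable fun l => ‖expansionCoeff χ c N v q r l‖ := by
  simpa only [expansionCoeff_eq N v q hr₀, norm_mul] using
    (summable_norm_coeff_mul_pow c (norm_natCast_mul_div_le q hr₀ hrp)).mul_left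
      ‖χ ((p : ℚ_[p]) ^ v / (N : ℚ_[p])) * χ (r : ℚ_[p])‖

theorem hasSum_expansionCoeff
    (hmul : ∀ x y : ℚ_[p], x ≠ 0 → y ≠ 0 → χ (x * y) = χ x * χ y)
    (htaylor : ∀ x : ℚ_[p], ‖x‖ ≤ (p : ℝ)⁻¹ →
      HasSum (fun l : ℕ => (c l : ℚ_[p]) * x ^ l) (χ (1 + x)))
    {N : ℕ} (hN : N ≠ 0) (v q : ℕ) {r : ℕ} (hr₀ : 0 < r) (hrp : r < p) :
    HasSum (expansionCoeff χ c N v q r)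
      (χ (((p ^ v * (p * q + r) : ℕ) : ℚ_[p]) / (N : ℚ_[p]))) := by
  set x : ℚ_[p] := ((p * q : ℕ) : ℚ_[p]) / r
  have hr : (r : ℚ_[p]) ≠ 0 := Nat.cast_ne_zero.mpr hr₀.ne'
  have ha : (p : ℚ_[p]) ^ v / (N : ℚ_[p]) ≠ 0 :=
    div_ne_zero (pow_ne_zero _ (Nat.cast_ne_zero.mpr hp.out.ne_zero)) (Nat.cast_ne_zero.mpr hN)
  have hcast : (((p ^ v * (p * q + r) : ℕ) : ℚ_[p]) / (N : ℚ_[p])) =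
      (p : ℚ_[p]) ^ v / (N : ℚ_[p]) * ((p * q + r : ℕ) : ℚ_[p]) := by
    push_cast
    ring
  have hfactor : ((p * q + r : ℕ) : ℚ_[p]) = r * (1 + x) := by
    simp only [x]
    field_simp
    push_cast
    ring
  have h1x : 1 + x ≠ 0 := right_ne_zero_of_mul (hfactor ▸ Nat.cast_ne_zero.mpr (by omega))
  rw [hcast, hfactor, hmul _ _ ha (mul_ne_zero hr h1x), hmul _ _ hr h1x, ← mul_assoc,
    show expansionCoeff χ c N v q r = _ from funext (expansionCoeff_eq N v q hr₀)]
  exact (htaylor x (norm_natCast_mul_div_le q hr₀ hrp)).mul_left _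

end Character

theorem hasSum_expansionCoeff_prod {p : ℕ} [hp : Fact p.Prime] {d N : ℕ}
    {χ : Fin d → ℚ_[p] → ℚ_[p]} {c : Fin d → ℕ → ℤ_[p]}
    (hmul : ∀ i : Fin d, ∀ x y : ℚ_[p], x ≠ 0 → y ≠ 0 → χ i (x * y) = χ i x * χ i y)
    (htaylor : ∀ i : Fin d, ∀ x : ℚ_[p], ‖x‖ ≤ (p : ℝ)⁻¹ →
      HasSum (fun l : ℕ => (c i l : ℚ_[p]) * x ^ l) (χ i (1 + x)))
    {s : (Fin d → ℕ) × (Fin d → ℕ) × (Fin d → ℕ)} (hs : IsAdmissibleVQR p N s) :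
    HasSum
      (fun l : Fin d → ℕ => ∏ i, expansionCoeff (χ i) (c i) N (s.1 i) (s.2.1 i) (s.2.2 i) (l i))
      (∏ i, χ i ((ofVQR p s i : ℚ_[p]) / (N : ℚ_[p]))) := by
  obtain ⟨hr, -, -, hlt⟩ := hs
  have hr' : ∀ i, 0 < s.2.2 i ∧ s.2.2 i < p := fun i => by
    have := hp.out.pos
    have := hr i
    omega
  exact hasSum_fin_prod
    (fun i => hasSum_expansionCoeff (hmul i) (htaylor i) (by have := hlt i; omega) _ _
      (hr' i).1 (hr' i).2)
    (fun i => summable_norm_expansionCoeff _ _ _ (hr' i).1 (hr' i).2)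

theorem hasSum_sum_chainsN {p : ℕ} [Fact p.Prime] {d N : ℕ}
    {χ : Fin d → ℚ_[p] → ℚ_[p]} {c : Fin d → ℕ → ℤ_[p]}
    (hmul : ∀ i : Fin d, ∀ x y : ℚ_[p], x ≠ 0 → y ≠ 0 → χ i (x * y) = χ i x * χ i y)
    (htaylor : ∀ i : Fin d, ∀ x : ℚ_[p], ‖x‖ ≤ (p : ℝ)⁻¹ →
      HasSum (fun l : ℕ => (c i l : ℚ_[p]) * x ^ l) (χ i (1 + x))) :
    HasSum (fun t : (Fin d → ℕ) × (Fin d → ℕ) × (Fin d → ℕ) × (Fin d → ℕ) =>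
        if IsAdmissibleVQR p N (t.1, t.2.1, t.2.2.1) then
          ∏ i, expansionCoeff (χ i) (c i) N (t.1 i) (t.2.1 i) (t.2.2.1 i) (t.2.2.2 i)
        else 0)
      (∑ n ∈ chainsN d N, ∏ i, χ i ((n i : ℚ_[p]) / (N : ℚ_[p]))) := by
  classical
  let e : ((Fin d → ℕ) × (Fin d → ℕ) × (Fin d → ℕ)) × (Fin d → ℕ) ≃
      (Fin d → ℕ) × (Fin d → ℕ) × (Fin d → ℕ) × (Fin d → ℕ) :=
    (Equiv.prodAssoc _ _ _).trans ((Equiv.refl _).prodCongr (Equiv.prodAssoc _ _ _))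
  rw [sum_chainsN_eq_sum_image_toVQR (p := p), ← e.hasSum_iff]
  convert hasSum_ite_fst_mem _ fun s hs =>
    hasSum_expansionCoeff_prod hmul htaylor (mem_image_toVQR_chainsN.mp hs) using 1
  ext x
  exact if_congr mem_image_toVQR_chainsN.symm rfl rfl

theorem mhs_padic_expansion_general (p : ℕ) [Fact p.Prime] (d N : ℕ)
    (χ : Fin d → ℚ_[p] → ℚ_[p]) (c : Fin d → ℕ → ℤ_[p])
    (hmul : ∀ i : Fin d, ∀ x y : ℚ_[p], x ≠ 0 → y ≠ 0 → χ i (x * y) = χ i x * χ i y)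
    (htaylor : ∀ i : Fin d, ∀ x : ℚ_[p], ‖x‖ ≤ (p : ℝ)⁻¹ →
      HasSum (fun l : ℕ => (c i l : ℚ_[p]) * x ^ l) (χ i (1 + x))) :
    Summable (fun t : (Fin d → ℕ) × (Fin d → ℕ) × (Fin d → ℕ) × (Fin d → ℕ) =>
        if (∀ i, 1 ≤ t.2.2.1 i ∧ t.2.2.1 i ≤ p - 1) ∧
            (∀ i, 0 < p ^ (t.1 i) * (p * t.2.1 i + t.2.2.1 i)) ∧
            (∀ i j : Fin d, i < j →
              p ^ (t.1 i) * (p * t.2.1 i + t.2.2.1 i) <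
                p ^ (t.1 j) * (p * t.2.1 j + t.2.2.1 j)) ∧
            (∀ i, p ^ (t.1 i) * (p * t.2.1 i + t.2.2.1 i) < N) then
          ∏ i, χ i ((p : ℚ_[p]) ^ (t.1 i) / (N : ℚ_[p])) * χ i ((t.2.2.1 i : ℚ_[p])) *
            ((t.2.2.1 i : ℚ_[p])) ^ (-(t.2.2.2 i : ℤ)) * (c i (t.2.2.2 i) : ℚ_[p]) *
            ((p * t.2.1 i : ℕ) : ℚ_[p]) ^ (t.2.2.2 i)
        else 0) ∧
    (∑ n ∈ chainsN d N, ∏ i, χ i ((n i : ℚ_[p]) / (N : ℚ_[p])))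
      = ∑' t : (Fin d → ℕ) × (Fin d → ℕ) × (Fin d → ℕ) × (Fin d → ℕ),
          if (∀ i, 1 ≤ t.2.2.1 i ∧ t.2.2.1 i ≤ p - 1) ∧
              (∀ i, 0 < p ^ (t.1 i) * (p * t.2.1 i + t.2.2.1 i)) ∧
              (∀ i j : Fin d, i < j →
                p ^ (t.1 i) * (p * t.2.1 i + t.2.2.1 i) <
                  p ^ (t.1 j) * (p * t.2.1 j + t.2.2.1 j)) ∧
              (∀ i, p ^ (t.1 i) * (p * t.2.1 i + t.2.2.1 i) < N) then
            ∏ i, χ i ((p : ℚ_[p]) ^ (t.1 i) / (N : ℚ_[p])) * χ i ((t.2.2.1 i : ℚ_[p])) *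
              ((t.2.2.1 i : ℚ_[p])) ^ (-(t.2.2.2 i : ℤ)) * (c i (t.2.2.2 i) : ℚ_[p]) *
              ((p * t.2.1 i : ℕ) : ℚ_[p]) ^ (t.2.2.2 i)
          else 0 := by
  have h := hasSum_sum_chainsN (N := N) hmul htaylor
  exact ⟨h.summable, h.tsum_eq.symm⟩

/-- Reindexation and `p`-adic expansion of `H'_N(χ_d,…,χ_1) = ∑_{0<n_1<⋯<n_d<N} ∏ χ_i(n_i/N)`:
writing each index uniquely as `n_i = p^{v_i}(pq_i+r_i)` with `r_i ∈ {1,…,p−1}`, one has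
`H'_N(χ_d,…,χ_1) = ∑_{(v_i,q_i,r_i)_i chains} ∑_{l_1,…,l_d ≥ 0}
  ∏_i χ_i(p^{v_i}/N)·χ_i(r_i)·r_i^{−l_i}·c_{i,l_i}·(pq_i)^{l_i}`,
the whole family (over all `(v,q,r,l)`, vanishing outside the chain condition) being summable
in `ℚ_p`.  Here the `χ_i` are `p`-adic characters with Taylor coefficients `c_{i,l} ∈ ℤ_p`
at `1`. -/
theorem mhs_padic_expansion (p : ℕ) [Fact p.Prime] (d N : ℕ) (hd : 1 ≤ d) (hN : 2 ≤ N)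
    (χ : Fin d → ℚ_[p] → ℚ_[p]) (c : Fin d → ℕ → ℤ_[p])
    (hmul : ∀ i : Fin d, ∀ x y : ℚ_[p], x ≠ 0 → y ≠ 0 → χ i (x * y) = χ i x * χ i y)
    (hne : ∀ i : Fin d, ∀ x : ℚ_[p], x ≠ 0 → χ i x ≠ 0)
    (htaylor : ∀ i : Fin d, ∀ x : ℚ_[p], ‖x‖ ≤ (p : ℝ)⁻¹ →
      HasSum (fun l : ℕ => (c i l : ℚ_[p]) * x ^ l) (χ i (1 + x))) :
    Summable (fun t : (Fin d → ℕ) × (Fin d → ℕ) × (Fin d → ℕ) × (Fin d → ℕ) =>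
        if (∀ i, 1 ≤ t.2.2.1 i ∧ t.2.2.1 i ≤ p - 1) ∧
            (∀ i, 0 < p ^ (t.1 i) * (p * t.2.1 i + t.2.2.1 i)) ∧
            (∀ i j : Fin d, i < j →
              p ^ (t.1 i) * (p * t.2.1 i + t.2.2.1 i) <
                p ^ (t.1 j) * (p * t.2.1 j + t.2.2.1 j)) ∧
            (∀ i, p ^ (t.1 i) * (p * t.2.1 i + t.2.2.1 i) < N) then
          ∏ i, χ i ((p : ℚ_[p]) ^ (t.1 i) / (N : ℚ_[p])) * χ i ((t.2.2.1 i : ℚ_[p])) *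
            ((t.2.2.1 i : ℚ_[p])) ^ (-(t.2.2.2 i : ℤ)) * (c i (t.2.2.2 i) : ℚ_[p]) *
            ((p * t.2.1 i : ℕ) : ℚ_[p]) ^ (t.2.2.2 i)
        else 0) ∧
    (∑ n ∈ chainsN d N, ∏ i, χ i ((n i : ℚ_[p]) / (N : ℚ_[p])))
      = ∑' t : (Fin d → ℕ) × (Fin d → ℕ) × (Fin d → ℕ) × (Fin d → ℕ),
          if (∀ i, 1 ≤ t.2.2.1 i ∧ t.2.2.1 i ≤ p - 1) ∧
              (∀ i, 0 < p ^ (t.1 i) * (p * t.2.1 i + t.2.2.1 i)) ∧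
              (∀ i j : Fin d, i < j →
                p ^ (t.1 i) * (p * t.2.1 i + t.2.2.1 i) <
                  p ^ (t.1 j) * (p * t.2.1 j + t.2.2.1 j)) ∧
              (∀ i, p ^ (t.1 i) * (p * t.2.1 i + t.2.2.1 i) < N) then
            ∏ i, χ i ((p : ℚ_[p]) ^ (t.1 i) / (N : ℚ_[p])) * χ i ((t.2.2.1 i : ℚ_[p])) *
              ((t.2.2.1 i : ℚ_[p])) ^ (-(t.2.2.2 i : ℤ)) * (c i (t.2.2.2 i) : ℚ_[p]) *
              ((p * t.2.1 i : ℕ) : ℚ_[p]) ^ (t.2.2.2 i)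
          else 0 :=
  mhs_padic_expansion_general p d N χ c hmul htaylor
end

section
/- Let p be a prime, and k, d, r ≥ 1 integers, and let s_1,…,s_d ≥ 1. Then the difference (p^k)^{s_1+⋯+s_d} · H_{p^k}(s_d,…,s_1) − ∑ over all tuples (v_i, q_i, r_i)_{i=1,…,d} with v_i ∈ {0,…,k−1}, q_i ≥ 0, r_i ∈ {1,…,p−1} satisfying 0 < p^{v_1}(pq_1+r_1) < ⋯ < p^{v_d}(pq_d+r_d) < p^k, of ∏_{i=1}^d (p^{k−v_i})^{s_i} · (pq_i+r_i)^{p^{r−1}(p−1) − s_i} (an integer power, taken in ℚ_p, of the p-adic unit pq_i+r_i; the sum is finite) has p-adic valuation at least r. -/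
/-!
Write each index as `n = p^v u` with `u = pq + r` prime to `p`. Then `(p^k)^s / n^s` equals
`(p^{k-v})^s u^{-s}`, so after reindexing the two sums run over the same chains, and the two terms
attached to a chain differ by the factor `U^{p^{r-1}(p-1)}`, where `U = ∏ u_i` is prime to `p`.
By Euler's theorem this factor is `1` modulo `p^r`, while the common cofactor is `p`-integral;
the ultrametric inequality then bounds the whole difference by `p^{-r}`.
-/

open Finset

theorem Nat.Prime.coprime_mul_add_of_lt {p : ℕ} (hp : p.Prime) (q : ℕ) {r : ℕ} (hr0 : r ≠ 0)
    (hrp : r < p) : p.Coprime (p * q + r) :=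
  (Nat.coprime_mul_left_add_right p r q).mpr (Nat.coprime_of_lt_prime hr0 hrp hp)

theorem Nat.totient_prime_pow_dvd {p : ℕ} (hp : p.Prime) (r : ℕ) :
    Nat.totient (p ^ r) ∣ p ^ (r - 1) * (p - 1) := by
  rcases Nat.eq_zero_or_pos r with rfl | hr
  · simp
  · rw [Nat.totient_prime_pow hp hr]

theorem pow_pow_mul_one_div_mul_pow_pow {K : Type*} [Field K] {a : K} (ha : a ≠ 0) {k v : ℕ}
    (hv : v ≤ k) (u : K) (s : ℕ) :
    (a ^ k) ^ s * (1 / (a ^ v * u) ^ s) = (a ^ (k - v)) ^ s * u ^ (-(s : ℤ)) := by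
  rw [← Nat.sub_add_cancel hv, pow_add, Nat.add_sub_cancel, zpow_neg, zpow_natCast, mul_pow,
    mul_pow]
  field_simp

abbrev ofTriple (p : ℕ) (x : ℕ × ℕ × ℕ) : ℕ := p ^ x.1 * (p * x.2.1 + x.2.2)

def toTriple (p n : ℕ) : ℕ × ℕ × ℕ :=
  (n.factorization p, ordCompl[p] n / p, ordCompl[p] n % p)

section Decomposition

variable {p : ℕ}

theorem ofTriple_toTriple (n : ℕ) : ofTriple p (toTriple p n) = n := by
  simp only [ofTriple, toTriple, Nat.div_add_mod, Nat.ordProj_mul_ordCompl_eq_self]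

theorem toTriple_ofTriple (hp : p.Prime) {x : ℕ × ℕ × ℕ} (hr0 : x.2.2 ≠ 0) (hrp : x.2.2 < p) :
    toTriple p (ofTriple p x) = x := by
  obtain ⟨v, q, r⟩ := x
  have hcop := hp.coprime_mul_add_of_lt q hr0 hrp
  have hval : (p ^ v * (p * q + r)).factorization p = v := by
    rw [Nat.factorization_mul_apply_of_coprime (hcop.pow_left v), hp.factorization_pow,
      Finsupp.single_eq_same, Nat.factorization_eq_zero_of_not_dvd
        ((hp.coprime_iff_not_dvd).mp hcop), add_zero]
  simp only [toTriple, ofTriple, hval, Nat.mul_div_cancel_left _ (pow_pos hp.pos v),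
    Nat.mul_add_div hp.pos, Nat.div_eq_of_lt hrp, add_zero, Nat.mul_add_mod,
    Nat.mod_eq_of_lt hrp]

theorem toTriple_mem (hp : p.Prime) {k n : ℕ} (hn0 : n ≠ 0) (hnk : n < p ^ k) :
    toTriple p n ∈ range k ×ˢ range (p ^ (k - 1)) ×ˢ Icc 1 (p - 1) := by
  have hv : n.factorization p < k :=
    (Nat.pow_lt_pow_iff_right hp.one_lt).mp ((Nat.ordProj_le p hn0).trans_lt hnk)
  have hq : ordCompl[p] n / p < p ^ (k - 1) := by
    rw [Nat.div_lt_iff_lt_mul hp.pos, ← pow_succ]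
    exact ((Nat.ordCompl_le n p).trans_lt hnk).trans_le
      (Nat.pow_le_pow_right hp.pos (by omega))
  have hr0 : ordCompl[p] n % p ≠ 0 :=
    fun h => Nat.not_dvd_ordCompl hp hn0 (Nat.dvd_of_mod_eq_zero h)
  have hrp : ordCompl[p] n % p < p := Nat.mod_lt _ hp.pos
  simp only [toTriple, mem_product, mem_range, mem_Icc]
  omega

theorem sum_chainsN_eq_sum_triples {M : Type*} [AddCommMonoid M] (hp : p.Prime) (k d : ℕ)
    (f : (Fin d → ℕ) → M) :
    ∑ n ∈ chainsN d (p ^ k), f n =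
      ∑ x ∈ (Fintype.piFinset fun _ : Fin d =>
            range k ×ˢ range (p ^ (k - 1)) ×ˢ Icc 1 (p - 1)).filter
          (fun x => (∀ i j : Fin d, i < j → ofTriple p (x i) < ofTriple p (x j)) ∧
            ∀ i, ofTriple p (x i) < p ^ k),
        f fun i => ofTriple p (x i) := by
  have hpos {x : ℕ × ℕ × ℕ} (hx : x ∈ range k ×ˢ range (p ^ (k - 1)) ×ˢ Icc 1 (p - 1)) :
      0 < ofTriple p x := by
    simp only [mem_product, mem_Icc] at hx
    exact Nat.mul_pos (pow_pos hp.pos _) (by omega)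
  have htriple {x : ℕ × ℕ × ℕ} (hx : x ∈ range k ×ˢ range (p ^ (k - 1)) ×ˢ Icc 1 (p - 1)) :
      toTriple p (ofTriple p x) = x := by
    simp only [mem_product, mem_Icc] at hx
    exact toTriple_ofTriple hp (by omega) (by omega)
  refine sum_nbij' (fun n i => toTriple p (n i)) (fun x i => ofTriple p (x i))
    ?_ ?_ ?_ ?_ ?_
  · intro n hn
    simp only [chainsN, mem_filter, Fintype.mem_piFinset, mem_Ioo] at hn ⊢
    simp only [ofTriple_toTriple]
    exact ⟨fun i => toTriple_mem hp (hn.1 i).1.ne' (hn.1 i).2, hn.2, fun i => (hn.1 i).2⟩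
  · intro x hx
    simp only [chainsN, mem_filter, Fintype.mem_piFinset, mem_Ioo] at hx ⊢
    exact ⟨fun i => ⟨hpos (hx.1 i), hx.2.2 i⟩, hx.2.1⟩
  · intro n _
    simp only [ofTriple_toTriple]
  · intro x hx
    simp only [mem_filter, Fintype.mem_piFinset] at hx
    exact funext fun i => htriple (hx.1 i)
  · intro n _
    simp only [ofTriple_toTriple]

end Decomposition

namespace Padic

variable {p : ℕ} [Fact p.Prime]

theorem norm_one_sub_pow_le {M e : ℕ} (r : ℕ) (hM : p.Coprime M)
    (he : Nat.totient (p ^ r) ∣ e) :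
    ‖1 - (M : ℚ_[p]) ^ e‖ ≤ (p : ℝ) ^ (-(r : ℤ)) := by
  obtain ⟨c, rfl⟩ := he
  have heuler : M ^ (Nat.totient (p ^ r) * c) ≡ 1 [MOD p ^ r] := by
    simpa [pow_mul] using (Nat.ModEq.pow_totient (hM.symm.pow_right r)).pow c
  have hdvd : ((p : ℤ) ^ r) ∣ 1 - (M : ℤ) ^ (Nat.totient (p ^ r) * c) := by
    exact_mod_cast (Nat.modEq_iff_dvd.mp heuler)
  exact_mod_cast (norm_int_le_pow_iff_dvd _ r).mpr hdvd

theorem norm_pow_mul_prod_one_div_sub_prod_le {d k : ℕ} (r : ℕ) (s v u : Fin d → ℕ)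
    (hv : ∀ i, v i ≤ k) (hu : ∀ i, p.Coprime (u i)) :
    ‖((p : ℚ_[p]) ^ k) ^ (∑ i, s i) * ∏ i, 1 / ((p ^ v i * u i : ℕ) : ℚ_[p]) ^ s i -
        ∏ i, ((p : ℚ_[p]) ^ (k - v i)) ^ s i *
          (u i : ℚ_[p]) ^ ((p ^ (r - 1) * (p - 1) : ℤ) - (s i : ℤ))‖
      ≤ (p : ℝ) ^ (-(r : ℤ)) := by
  have hp := (Fact.out : p.Prime)
  have hp0 : (p : ℚ_[p]) ≠ 0 := Nat.cast_ne_zero.mpr hp.ne_zero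
  have hu0 (i : Fin d) : (u i : ℚ_[p]) ≠ 0 :=
    Nat.cast_ne_zero.mpr fun h => hp.one_lt.ne' (by simpa [h] using hu i)
  set E : ℕ := p ^ (r - 1) * (p - 1)
  have hE : (p ^ (r - 1) * (p - 1) : ℤ) = (E : ℤ) := by
    push_cast [E, Nat.cast_sub hp.one_le]; ring
  set a : Fin d → ℚ_[p] := fun i => ((p : ℚ_[p]) ^ (k - v i)) ^ s i * (u i : ℚ_[p]) ^ (-(s i : ℤ))
  have hfirst : ((p : ℚ_[p]) ^ k) ^ (∑ i, s i) * ∏ i, 1 / ((p ^ v i * u i : ℕ) : ℚ_[p]) ^ s i =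
      ∏ i, a i := by
    rw [← prod_pow_eq_pow_sum, ← prod_mul_distrib]
    refine prod_congr rfl fun i _ => ?_
    push_cast
    exact pow_pow_mul_one_div_mul_pow_pow hp0 (hv i) _ _
  have hsecond : ∏ i, ((p : ℚ_[p]) ^ (k - v i)) ^ s i *
      (u i : ℚ_[p]) ^ ((p ^ (r - 1) * (p - 1) : ℤ) - (s i : ℤ)) =
      (∏ i, a i) * ((∏ i, u i : ℕ) : ℚ_[p]) ^ E := by
    rw [Nat.cast_prod, ← prod_pow, ← prod_mul_distrib]
    refine prod_congr rfl fun i _ => ?_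
    rw [hE, sub_eq_neg_add, zpow_add₀ (hu0 i), zpow_natCast]
    ring
  have ha : ‖∏ i, a i‖ ≤ 1 := by
    rw [norm_prod]
    refine prod_le_one (fun i _ => norm_nonneg _) fun i _ => ?_
    rw [norm_mul, norm_zpow, norm_natCast_eq_one_iff.mpr (hu i), one_zpow, mul_one, norm_pow,
      norm_pow, norm_p]
    exact pow_le_one₀ (by positivity) (pow_le_one₀ (by positivity)
      (inv_le_one_of_one_le₀ (by exact_mod_cast hp.one_le)))
  have hU : ‖1 - ((∏ i, u i : ℕ) : ℚ_[p]) ^ E‖ ≤ (p : ℝ) ^ (-(r : ℤ)) :=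
    norm_one_sub_pow_le r (Nat.Coprime.prod_right fun i _ => hu i)
      (Nat.totient_prime_pow_dvd hp r)
  rw [hfirst, hsecond, ← mul_one_sub, norm_mul]
  calc ‖∏ i, a i‖ * ‖1 - ((∏ i, u i : ℕ) : ℚ_[p]) ^ E‖
      ≤ 1 * (p : ℝ) ^ (-(r : ℤ)) := mul_le_mul ha hU (norm_nonneg _) zero_le_one
    _ = (p : ℝ) ^ (-(r : ℤ)) := one_mul _

end Padic

theorem mhs_congruence_mod_p_pow_general (p : ℕ) [Fact p.Prime] (k d r : ℕ) (s : Fin d → ℕ) :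
    ‖((p : ℚ_[p]) ^ k) ^ (∑ i, s i) *
          (∑ n ∈ chainsN d (p ^ k), ∏ i, 1 / (n i : ℚ_[p]) ^ s i) -
        ∑ x ∈ (Fintype.piFinset fun _ : Fin d =>
              Finset.range k ×ˢ Finset.range (p ^ (k - 1)) ×ˢ Finset.Icc 1 (p - 1)).filter
            (fun x => (∀ i j : Fin d, i < j →
                p ^ (x i).1 * (p * (x i).2.1 + (x i).2.2) <
                  p ^ (x j).1 * (p * (x j).2.1 + (x j).2.2)) ∧
              ∀ i, p ^ (x i).1 * (p * (x i).2.1 + (x i).2.2) < p ^ k),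
          ∏ i, ((p : ℚ_[p]) ^ (k - (x i).1)) ^ (s i) *
            (((p * (x i).2.1 + (x i).2.2 : ℕ)) : ℚ_[p]) ^
              ((p ^ (r - 1) * (p - 1) : ℤ) - (s i : ℤ))‖
      ≤ (p : ℝ) ^ (-(r : ℤ)) := by
  have hp := (Fact.out : p.Prime)
  rw [mul_sum, sum_chainsN_eq_sum_triples hp, ← sum_sub_distrib]
  refine IsUltrametricDist.norm_sum_le_of_forall_le_of_nonneg (by positivity) fun x hx => ?_
  simp only [mem_filter, Fintype.mem_piFinset, mem_product, mem_range, mem_Icc] at hx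
  refine Padic.norm_pow_mul_prod_one_div_sub_prod_le r s _ _ (fun i => (hx.1 i).1.le) fun i => ?_
  obtain ⟨-, -, hr1, hrp⟩ := hx.1 i
  exact hp.coprime_mul_add_of_lt _ (by omega) (by omega)

/-- Congruence modulo `p^r` for `(p^k)^{s_1+⋯+s_d}·H_{p^k}(s_d,…,s_1)`: writing each index
uniquely as `n_i = p^{v_i}(pq_i+r_i)` with `v_i ∈ {0,…,k−1}`, `q_i ≥ 0`, `r_i ∈ {1,…,p−1}`,
the difference between `(p^k)^{s_1+⋯+s_d}·H_{p^k}(s_d,…,s_1)` and the finite sum over the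
chains `0 < p^{v_1}(pq_1+r_1) < ⋯ < p^{v_d}(pq_d+r_d) < p^k` of
`∏_i (p^{k−v_i})^{s_i}·(pq_i+r_i)^{p^{r−1}(p−1)−s_i}` has `p`-adic valuation at least `r`.
Each triple `(v_i,q_i,r_i)` is encoded as an element of `ℕ × ℕ × ℕ`. -/
theorem mhs_congruence_mod_p_pow (p : ℕ) [Fact p.Prime] (k d r : ℕ)
    (hk : 1 ≤ k) (hd : 1 ≤ d) (hr : 1 ≤ r) (s : Fin d → ℕ) (hs : ∀ i, 1 ≤ s i) :
    ‖((p : ℚ_[p]) ^ k) ^ (∑ i, s i) *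
          (∑ n ∈ chainsN d (p ^ k), ∏ i, 1 / (n i : ℚ_[p]) ^ s i) -
        ∑ x ∈ (Fintype.piFinset fun _ : Fin d =>
              Finset.range k ×ˢ Finset.range (p ^ (k - 1)) ×ˢ Finset.Icc 1 (p - 1)).filter
            (fun x => (∀ i j : Fin d, i < j →
                p ^ (x i).1 * (p * (x i).2.1 + (x i).2.2) <
                  p ^ (x j).1 * (p * (x j).2.1 + (x j).2.2)) ∧
              ∀ i, p ^ (x i).1 * (p * (x i).2.1 + (x i).2.2) < p ^ k),
          ∏ i, ((p : ℚ_[p]) ^ (k - (x i).1)) ^ (s i) *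
            (((p * (x i).2.1 + (x i).2.2 : ℕ)) : ℚ_[p]) ^
              ((p ^ (r - 1) * (p - 1) : ℤ) - (s i : ℤ))‖
      ≤ (p : ℝ) ^ (-(r : ℤ)) :=
  mhs_congruence_mod_p_pow_general p k d r s
end
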